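/- arXiv:1911.09580 — 9 statements merged into one kernel-verified Lean document; each statement's English description precedes it below -/
import Mathlib

section
/- Let P, Q be probability measures on a measurable space (Ω, M) and g : Ω → ℝ be measurable. Then log ∫ e^g dQ ≤ inf_{c>1} { c⁻¹ log ∫ e^{c g} dP + (c−1)⁻¹ R_{c/(c−1)}(Q‖P) }. Moreover, if dQ = e^{α g} dP / E_P[e^{α g}] for some α > 0 with E_P[e^{α g}] < ∞, then equality holds and the infimum is attained at c = 1 + α. -/
open MeasureTheory Real Set Filter
open scoped ENNReal Classical

variable {Ω : Type*} [MeasurableSpace Ω]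

/-- Auxiliary Rényi divergence for `α ∈ (0,1) ∪ (1,∞)`:
`R_α(Q‖P) = (α(α-1))⁻¹ log ∫_{p>0} q^α p^{1-α} dν` with `ν = P + Q`,
and `+∞` if `α > 1` and `Q` is not absolutely continuous w.r.t. `P`. -/
noncomputable def renyiDivAux (α : ℝ) (Q P : Measure Ω) : EReal :=
  if 1 < α ∧ ¬ Q ≪ P then (⊤ : EReal)
  else ((α * (α - 1))⁻¹ : ℝ) *
    ENNReal.log (∫⁻ x in {x | 0 < P.rnDeriv (P + Q) x},
      (Q.rnDeriv (P + Q) x) ^ α * (P.rnDeriv (P + Q) x) ^ (1 - α) ∂(P + Q))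

/-- Rényi divergence of order `α ∈ ℝ \ {0,1}`, extended to negative orders by
`R_α(Q‖P) = R_{1-α}(P‖Q)`. -/
noncomputable def renyiDiv (α : ℝ) (Q P : Measure Ω) : EReal :=
  if α < 0 then renyiDivAux (1 - α) P Q else renyiDivAux α Q P

/-- Relative entropy (KL divergence): `R(Q‖P) = ∫ log(dQ/dP) dQ` if `Q ≪ P`, else `+∞`. -/
noncomputable def relEnt (Q P : Measure Ω) : EReal :=
  if Q ≪ P then ((∫ x, Real.log (Q.rnDeriv P x).toReal ∂Q : ℝ) : EReal) else ⊤

/-- Cumulant generating function of `log (dQ/dP)` under `Q`: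
`Λ_Q^{log dQ/dP}(λ) = log E_Q[(dQ/dP)^λ]`. -/
noncomputable def cgfLLR (Q P : Measure Ω) (l : ℝ) : EReal :=
  ENNReal.log (∫⁻ x, (Q.rnDeriv P x) ^ l ∂Q)

/-- Rényi-divergence ambiguity set `U^Λ(P)`. -/
def ambiguitySet (L : ℝ → EReal) (P : Measure Ω) : Set (Measure Ω) :=
  {Q | IsProbabilityMeasure Q ∧ Q ≪ P ∧ ∀ l > 0, cgfLLR Q P l ≤ L l}

/-- Addition on `EReal` with the convention `-∞ + ∞ = ∞`. -/
noncomputable def EReal.addTop (x y : EReal) : EReal := if x = ⊤ ∨ y = ⊤ then ⊤ else x + y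

/-- `G(r) = P(dQ/dP ≥ r)`. -/
noncomputable def tailG (Q P : Measure Ω) (r : ℝ) : ℝ≥0∞ :=
  P {x | ENNReal.ofReal r ≤ Q.rnDeriv P x}

/-- The distribution of `dQ/dP` under `P` (as a measure on `ℝ`). -/
noncomputable def likDist (Q P : Measure Ω) : Measure ℝ :=
  P.map (fun x => (Q.rnDeriv P x).toReal)

/-- `G_μ(r) = μ([r,∞))`. -/
noncomputable def Gmu (μ : Measure ℝ) (r : ℝ) : ℝ≥0∞ := μ (Set.Ici r)

/-- `Λ_μ(λ) = log((λ+1) ∫₀^∞ G_μ(z) z^λ dz)`. -/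
noncomputable def Lmu (μ : Measure ℝ) (l : ℝ) : EReal :=
  ENNReal.log (ENNReal.ofReal (l + 1) *
    ∫⁻ z in Set.Ioi (0 : ℝ), Gmu μ z * ENNReal.ofReal (z ^ l))

/-- The ambiguity set `U^μ(P) = U^{Λ_μ}(P)`. -/
def Umu (μ : Measure ℝ) (P : Measure Ω) : Set (Measure Ω) := ambiguitySet (Lmu μ) P



section RenyiHelpers

lemma ereal_coe_mul_ne_bot {r : ℝ} (hr : 0 < r) {x : EReal} (hx : x ≠ ⊥) :
    (r : EReal) * x ≠ ⊥ := by
  induction x with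
  | bot => exact absurd rfl hx
  | coe a => rw [← EReal.coe_mul]; exact EReal.coe_ne_bot _
  | top => rw [EReal.coe_mul_top_of_pos hr]; exact top_ne_bot

lemma ereal_coe_mul_coe_mul (r s : ℝ) (x : EReal) :
    (r : EReal) * ((s : EReal) * x) = ((r * s : ℝ) : EReal) * x := by
  rw [EReal.coe_mul, mul_assoc]

lemma lintegral_ofReal_exp_ne_zero (P : Measure Ω) [IsProbabilityMeasure P]
    {h : Ω → ℝ} (hh : Measurable h) :
    ∫⁻ x, ENNReal.ofReal (Real.exp (h x)) ∂P ≠ 0 := by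
  have hmeas : Measurable fun x => ENNReal.ofReal (Real.exp (h x)) := by fun_prop
  intro hcontra
  rw [lintegral_eq_zero_iff hmeas] at hcontra
  have h2 : ∀ᵐ x ∂P, False := by
    filter_upwards [hcontra] with x hx
    simp only [Pi.zero_apply, ENNReal.ofReal_eq_zero] at hx
    exact absurd hx (not_le.mpr (Real.exp_pos _))
  have h3 := Filter.eventually_false_iff_eq_bot.mp h2
  exact (MeasureTheory.ae_neBot.mpr (IsProbabilityMeasure.ne_zero P)).ne h3

lemma renyi_key_integral (P Q : Measure Ω) [IsFiniteMeasure P] [IsFiniteMeasure Q]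
    (hQP : Q ≪ P) {a : ℝ} (ha : 0 ≤ a) :
    ∫⁻ x in {x | 0 < P.rnDeriv (P + Q) x},
      (Q.rnDeriv (P + Q) x) ^ a * (P.rnDeriv (P + Q) x) ^ (1 - a) ∂(P + Q)
      = ∫⁻ x, (Q.rnDeriv P x) ^ a ∂P := by
  have hPν : P ≪ P + Q := by
    refine Measure.AbsolutelyContinuous.mk fun s hs h0 => ?_
    simp only [Measure.coe_add, Pi.add_apply, add_eq_zero] at h0
    exact h0.1
  have hSm : MeasurableSet {x | 0 < P.rnDeriv (P + Q) x} :=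
    measurableSet_lt measurable_const (Measure.measurable_rnDeriv _ _)
  have hmeas : Measurable fun x => (Q.rnDeriv P x) ^ a :=
    ENNReal.continuous_rpow_const.measurable.comp (Measure.measurable_rnDeriv _ _)
  have h1 : ∫⁻ x in {x | 0 < P.rnDeriv (P + Q) x},
      (Q.rnDeriv (P + Q) x) ^ a * (P.rnDeriv (P + Q) x) ^ (1 - a) ∂(P + Q)
      = ∫⁻ x in {x | 0 < P.rnDeriv (P + Q) x},
        P.rnDeriv (P + Q) x * (Q.rnDeriv P x) ^ a ∂(P + Q) := by
    refine setLIntegral_congr_fun_ae hSm ?_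
    filter_upwards [Measure.rnDeriv_mul_rnDeriv hQP (κ := P + Q),
      Measure.rnDeriv_lt_top P (P + Q)] with x hx hxt hxS
    have hp0 : P.rnDeriv (P + Q) x ≠ 0 := hxS.ne'
    rw [← hx, Pi.mul_apply, ENNReal.mul_rpow_of_nonneg _ _ ha, mul_assoc,
      ← ENNReal.rpow_add _ _ hp0 hxt.ne]
    have : a + (1 - a) = 1 := by ring
    rw [this, ENNReal.rpow_one, mul_comm]
  rw [h1, setLIntegral_rnDeriv_mul hPν hmeas.aemeasurable hSm]
  have hSuniv : {x | 0 < P.rnDeriv (P + Q) x} =ᵐ[P] Set.univ := by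
    rw [Filter.eventuallyEq_univ]
    filter_upwards [Measure.rnDeriv_pos hPν] with x hx using hx
  rw [setLIntegral_congr hSuniv, setLIntegral_univ]

lemma lintegral_rnDeriv_rpow_ne_zero (P Q : Measure Ω) [IsProbabilityMeasure Q]
    [SigmaFinite P] (hQP : Q ≪ P) {a : ℝ} (ha : 0 < a) :
    ∫⁻ x, (Q.rnDeriv P x) ^ a ∂P ≠ 0 := by
  have hmeas : Measurable fun x => (Q.rnDeriv P x) ^ a :=
    ENNReal.continuous_rpow_const.measurable.comp (Measure.measurable_rnDeriv _ _)
  intro hcontra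
  rw [lintegral_eq_zero_iff hmeas] at hcontra
  have h2 : Q.rnDeriv P =ᵐ[P] 0 := by
    filter_upwards [hcontra] with x hx
    simp only [Pi.zero_apply] at hx ⊢
    rcases ENNReal.rpow_eq_zero_iff.mp hx with ⟨h, _⟩ | ⟨_, h⟩
    · exact h
    · exact absurd h (not_lt.mpr ha.le)
  have h3 := Measure.lintegral_rnDeriv hQP
  rw [lintegral_congr_ae h2] at h3
  simp at h3

lemma renyi_bound_at (P Q : Measure Ω) [IsProbabilityMeasure P] [IsProbabilityMeasure Q]
    {g : Ω → ℝ} (hg : Measurable g) {c : ℝ} (hc : 1 < c) :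
    ENNReal.log (∫⁻ x, ENNReal.ofReal (Real.exp (g x)) ∂Q) ≤
      ((c⁻¹ : ℝ) : EReal) * ENNReal.log (∫⁻ x, ENNReal.ofReal (Real.exp (c * g x)) ∂P)
        + (((c - 1)⁻¹ : ℝ) : EReal) * renyiDiv (c / (c - 1)) Q P := by
  have hc0 : (0 : ℝ) < c := by linarith
  have hc1 : (0 : ℝ) < c - 1 := by linarith
  have hc'1 : 1 < c / (c - 1) := by rw [lt_div_iff₀ hc1]; linarith
  have hA0 : (∫⁻ x, ENNReal.ofReal (Real.exp (c * g x)) ∂P) ≠ 0 :=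
    lintegral_ofReal_exp_ne_zero P (hg.const_mul c)
  have hlogA : ENNReal.log (∫⁻ x, ENNReal.ofReal (Real.exp (c * g x)) ∂P) ≠ ⊥ :=
    fun h => hA0 (ENNReal.log_eq_bot_iff.mp h)
  rw [renyiDiv, if_neg (not_lt.mpr (by positivity))]
  by_cases hQP : Q ≪ P
  · rw [renyiDivAux, if_neg (fun h => h.2 hQP),
      renyi_key_integral P Q hQP (by positivity : (0:ℝ) ≤ c / (c-1))]
    have hfm : Measurable fun x => ENNReal.ofReal (Real.exp (g x)) :=
      ENNReal.measurable_ofReal.comp (Real.measurable_exp.comp hg)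
    have hconj : Real.HolderConjugate c (c / (c - 1)) := Real.HolderConjugate.conjExponent hc
    have hrw : ∫⁻ x, ENNReal.ofReal (Real.exp (g x)) ∂Q
        = ∫⁻ x, ENNReal.ofReal (Real.exp (g x)) * Q.rnDeriv P x ∂P := by
      rw [← lintegral_rnDeriv_mul hQP hfm.aemeasurable]
      exact lintegral_congr fun x => mul_comm _ _
    have hpow : ∀ x, (ENNReal.ofReal (Real.exp (g x))) ^ c
        = ENNReal.ofReal (Real.exp (c * g x)) := fun x => by
      rw [ENNReal.ofReal_rpow_of_pos (Real.exp_pos _), ← Real.exp_mul, mul_comm]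
    have hHolder := ENNReal.lintegral_mul_le_Lp_mul_Lq P hconj hfm.aemeasurable
      (Measure.measurable_rnDeriv Q P).aemeasurable
    simp only [Pi.mul_apply] at hHolder
    simp only [hpow] at hHolder
    rw [hrw]
    refine le_trans (ENNReal.log_monotone hHolder) (le_of_eq ?_)
    rw [ENNReal.log_mul_add, ENNReal.log_rpow, ENNReal.log_rpow, ereal_coe_mul_coe_mul]
    have hco : (c - 1)⁻¹ * ((c / (c - 1)) * ((c / (c - 1)) - 1))⁻¹ = 1 / (c / (c - 1)) := by
      rw [div_sub_one hc1.ne']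
      field_simp
      ring
    rw [hco, one_div c]
  · rw [renyiDivAux, if_pos ⟨hc'1, hQP⟩, EReal.coe_mul_top_of_pos (by positivity),
      EReal.add_top_of_ne_bot (ereal_coe_mul_ne_bot (by positivity) hlogA)]
    exact le_top

lemma ereal_calc2 {α : ℝ} (hα : 0 < α) (w : ℝ) {x : EReal} (hx : x ≠ ⊥) :
    (((1 + α)⁻¹ : ℝ) : EReal) * x
      + ((α⁻¹ : ℝ) : EReal) *
          ((((((1 + α) / α) * ((1 + α) / α - 1))⁻¹ : ℝ) : EReal) *
            ((((((1 + α) / α) * w : ℝ)) : EReal) + x))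
      = (w : EReal) + x := by
  have h1 : (0:ℝ) < 1 + α := by linarith
  have hcgt : 1 < (1 + α) / α := by rw [lt_div_iff₀ hα]; linarith
  have hc'' : (0:ℝ) < ((1 + α) / α) * ((1 + α) / α - 1) := by nlinarith
  induction x with
  | bot => exact absurd rfl hx
  | coe r =>
    norm_cast
    have hα' : α ≠ 0 := hα.ne'
    have h1' : (1:ℝ) + α ≠ 0 := h1.ne'
    field_simp
    ring
  | top =>
    rw [EReal.coe_add_top, EReal.coe_mul_top_of_pos (inv_pos.mpr hc''),
      EReal.coe_mul_top_of_pos (inv_pos.mpr hα),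
      EReal.coe_mul_top_of_pos (inv_pos.mpr h1), EReal.top_add_top, EReal.coe_add_top]

lemma renyi_equality_at (P Q : Measure Ω) [IsProbabilityMeasure P] [IsProbabilityMeasure Q]
    {g : Ω → ℝ} (hg : Measurable g) {α : ℝ} (hα : 0 < α)
    (hZ : (∫⁻ x, ENNReal.ofReal (Real.exp (α * g x)) ∂P) ≠ ⊤)
    (hQ : Q = (∫⁻ x, ENNReal.ofReal (Real.exp (α * g x)) ∂P)⁻¹ •
            P.withDensity (fun x => ENNReal.ofReal (Real.exp (α * g x)))) :
    ENNReal.log (∫⁻ x, ENNReal.ofReal (Real.exp (g x)) ∂Q) =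
      (((1 + α)⁻¹ : ℝ) : EReal) *
          ENNReal.log (∫⁻ x, ENNReal.ofReal (Real.exp ((1 + α) * g x)) ∂P)
        + ((((1 + α) - 1)⁻¹ : ℝ) : EReal) * renyiDiv ((1 + α) / ((1 + α) - 1)) Q P := by
  have e1 : (1 + α) - 1 = α := by ring
  rw [e1]
  set Z := ∫⁻ x, ENNReal.ofReal (Real.exp (α * g x)) ∂P with hZdef
  have hfm : Measurable fun x => ENNReal.ofReal (Real.exp (α * g x)) :=
    ENNReal.measurable_ofReal.comp (Real.measurable_exp.comp (hg.const_mul α))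
  have hZ0 : Z ≠ 0 := lintegral_ofReal_exp_ne_zero P (hg.const_mul α)
  have hQP : Q ≪ P := by
    rw [hQ]
    exact Measure.AbsolutelyContinuous.trans Measure.smul_absolutelyContinuous
      (withDensity_absolutelyContinuous P _)
  haveI : IsFiniteMeasure (P.withDensity fun x => ENNReal.ofReal (Real.exp (α * g x))) :=
    isFiniteMeasure_withDensity hZ
  have hrn : Q.rnDeriv P =ᵐ[P] fun x => Z⁻¹ * ENNReal.ofReal (Real.exp (α * g x)) := by
    rw [hQ]
    filter_upwards [Measure.rnDeriv_smul_left_of_ne_top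
        (P.withDensity fun x => ENNReal.ofReal (Real.exp (α * g x))) P
        (ENNReal.inv_ne_top.mpr hZ0),
      Measure.rnDeriv_withDensity P hfm] with x h1 h2
    rw [h1, Pi.smul_apply, h2, smul_eq_mul]
  set A := ∫⁻ x, ENNReal.ofReal (Real.exp ((1 + α) * g x)) ∂P with hAdef
  have hA0 : A ≠ 0 := lintegral_ofReal_exp_ne_zero P (hg.const_mul (1 + α))
  have hlogA : ENNReal.log A ≠ ⊥ := fun h => hA0 (ENNReal.log_eq_bot_iff.mp h)
  have hgm : Measurable fun x => ENNReal.ofReal (Real.exp (g x)) :=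
    ENNReal.measurable_ofReal.comp (Real.measurable_exp.comp hg)
  have hI : ∫⁻ x, ENNReal.ofReal (Real.exp (g x)) ∂Q = Z⁻¹ * A := by
    rw [hQ, lintegral_smul_measure, lintegral_withDensity_eq_lintegral_mul P hfm hgm]
    rw [hAdef]
    congr 1
    refine lintegral_congr fun x => ?_
    simp only [Pi.mul_apply]
    rw [← ENNReal.ofReal_mul (Real.exp_nonneg _), ← Real.exp_add]
    congr 2
    ring
  have hc'pos : (0:ℝ) < (1 + α) / α := by positivity
  have hBm : Measurable fun x => ENNReal.ofReal (Real.exp ((1 + α) * g x)) :=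
    ENNReal.measurable_ofReal.comp (Real.measurable_exp.comp (hg.const_mul (1 + α)))
  have hB : ∫⁻ x, (Q.rnDeriv P x) ^ ((1 + α) / α) ∂P = Z⁻¹ ^ ((1 + α) / α) * A := by
    have hstep : ∫⁻ x, (Q.rnDeriv P x) ^ ((1 + α) / α) ∂P
        = ∫⁻ x, Z⁻¹ ^ ((1 + α) / α) * ENNReal.ofReal (Real.exp ((1 + α) * g x)) ∂P := by
      refine lintegral_congr_ae ?_
      filter_upwards [hrn] with x hx
      rw [hx, ENNReal.mul_rpow_of_nonneg _ _ hc'pos.le]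
      congr 1
      rw [ENNReal.ofReal_rpow_of_pos (Real.exp_pos _), ← Real.exp_mul]
      congr 2
      field_simp
    rw [hstep, lintegral_const_mul _ hBm, hAdef]
  rw [renyiDiv, if_neg (not_lt.mpr hc'pos.le), renyiDivAux,
    if_neg (fun h => h.2 hQP), renyi_key_integral P Q hQP hc'pos.le, hB]
  rw [hI, ENNReal.log_mul_add, ENNReal.log_mul_add, ENNReal.log_rpow]
  have hZi0 : Z⁻¹ ≠ 0 := ENNReal.inv_ne_zero.mpr hZ
  have hZit : Z⁻¹ ≠ ⊤ := ENNReal.inv_ne_top.mpr hZ0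
  rw [ENNReal.log_pos_real hZi0 hZit, ← EReal.coe_mul]
  exact (ereal_calc2 hα _ hlogA).symm

end RenyiHelpers

/-- **Risk-sensitive UQ upper bound with tightness (Proposition 1.3).** For probability
measures `P, Q` and measurable `g : Ω → ℝ`,
`log ∫ e^g dQ ≤ inf_{c>1} { c⁻¹ log ∫ e^{cg} dP + (c-1)⁻¹ R_{c/(c-1)}(Q‖P) }`;
moreover, if `dQ = e^{α g} dP / E_P[e^{α g}]` with `α > 0` and `E_P[e^{α g}] < ∞`,
then equality holds and the infimum is attained at `c = 1 + α`. -/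
theorem renyi_uq_bound_with_equality (P Q : Measure Ω)
    [IsProbabilityMeasure P] [IsProbabilityMeasure Q]
    (g : Ω → ℝ) (hg : Measurable g) :
    (ENNReal.log (∫⁻ x, ENNReal.ofReal (Real.exp (g x)) ∂Q) ≤
      ⨅ c ∈ Set.Ioi (1 : ℝ),
        ((c⁻¹ : ℝ) : EReal) * ENNReal.log (∫⁻ x, ENNReal.ofReal (Real.exp (c * g x)) ∂P)
          + (((c - 1)⁻¹ : ℝ) : EReal) * renyiDiv (c / (c - 1)) Q P) ∧
    (∀ α : ℝ, 0 < α →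
      (∫⁻ x, ENNReal.ofReal (Real.exp (α * g x)) ∂P) ≠ ⊤ →
      Q = (∫⁻ x, ENNReal.ofReal (Real.exp (α * g x)) ∂P)⁻¹ •
            P.withDensity (fun x => ENNReal.ofReal (Real.exp (α * g x))) →
      ENNReal.log (∫⁻ x, ENNReal.ofReal (Real.exp (g x)) ∂Q) =
        (⨅ c ∈ Set.Ioi (1 : ℝ),
          ((c⁻¹ : ℝ) : EReal) * ENNReal.log (∫⁻ x, ENNReal.ofReal (Real.exp (c * g x)) ∂P)
            + (((c - 1)⁻¹ : ℝ) : EReal) * renyiDiv (c / (c - 1)) Q P) ∧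
      (⨅ c ∈ Set.Ioi (1 : ℝ),
          ((c⁻¹ : ℝ) : EReal) * ENNReal.log (∫⁻ x, ENNReal.ofReal (Real.exp (c * g x)) ∂P)
            + (((c - 1)⁻¹ : ℝ) : EReal) * renyiDiv (c / (c - 1)) Q P) =
        (((1 + α)⁻¹ : ℝ) : EReal) *
            ENNReal.log (∫⁻ x, ENNReal.ofReal (Real.exp ((1 + α) * g x)) ∂P)
          + ((((1 + α) - 1)⁻¹ : ℝ) : EReal) *
              renyiDiv ((1 + α) / ((1 + α) - 1)) Q P) := by
  constructor
  · exact le_iInf fun c => le_iInf fun hc => renyi_bound_at P Q hg (Set.mem_Ioi.mp hc)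
  · intro α hα hZ hQ
    have heq := renyi_equality_at P Q hg hα hZ hQ
    have hub : ENNReal.log (∫⁻ x, ENNReal.ofReal (Real.exp (g x)) ∂Q) ≤
        ⨅ c ∈ Set.Ioi (1 : ℝ),
          ((c⁻¹ : ℝ) : EReal) * ENNReal.log (∫⁻ x, ENNReal.ofReal (Real.exp (c * g x)) ∂P)
            + (((c - 1)⁻¹ : ℝ) : EReal) * renyiDiv (c / (c - 1)) Q P :=
      le_iInf fun c => le_iInf fun hc => renyi_bound_at P Q hg (Set.mem_Ioi.mp hc)
    have hmem : (1 + α) ∈ Set.Ioi (1 : ℝ) := Set.mem_Ioi.mpr (by linarith)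
    have hle := iInf₂_le (f := fun c (_ : c ∈ Set.Ioi (1:ℝ)) =>
      ((c⁻¹ : ℝ) : EReal) * ENNReal.log (∫⁻ x, ENNReal.ofReal (Real.exp (c * g x)) ∂P)
        + (((c - 1)⁻¹ : ℝ) : EReal) * renyiDiv (c / (c - 1)) Q P) (1 + α) hmem
    have h1 : (⨅ c ∈ Set.Ioi (1 : ℝ),
        ((c⁻¹ : ℝ) : EReal) * ENNReal.log (∫⁻ x, ENNReal.ofReal (Real.exp (c * g x)) ∂P)
          + (((c - 1)⁻¹ : ℝ) : EReal) * renyiDiv (c / (c - 1)) Q P) ≤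
        ENNReal.log (∫⁻ x, ENNReal.ofReal (Real.exp (g x)) ∂Q) := by
      rw [heq]; exact hle
    refine ⟨le_antisymm hub h1, le_antisymm hle ?_⟩
    rw [← heq]; exact hub
end

section
/- Let P be a probability measure on a measurable space (Ω, M), g : Ω → ℝ bounded measurable, and β, γ ∈ ℝ∖{0} with β < γ. Then β⁻¹ log ∫ e^{β g} dP equals the infimum over all probability measures Q on (Ω, M) of { γ⁻¹ log ∫ e^{γ g} dQ + (γ−β)⁻¹ R_{γ/(γ−β)}(P‖Q) }, and γ⁻¹ log ∫ e^{γ g} dP equals the supremum over all probability measures Q on (Ω, M) of { β⁻¹ log ∫ e^{β g} dQ − (γ−β)⁻¹ R_{γ/(γ−β)}(Q‖P) }. -/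
open MeasureTheory Real Set Filter
open scoped ENNReal Classical

variable {Ω : Type*} [MeasurableSpace Ω]

/-! ### Auxiliary lemmas for the proof -/

section Aux



variable {Ω : Type*} [MeasurableSpace Ω]

lemma integrable_exp_mul (P : Measure Ω) [IsProbabilityMeasure P] {g : Ω → ℝ}
    (hg : Measurable g) {C : ℝ} (hC : ∀ x, |g x| ≤ C) (t : ℝ) :
    Integrable (fun x => Real.exp (t * g x)) P := by
  refine (integrable_const (Real.exp (|t| * C))).mono'
    ((hg.const_mul t).exp.aestronglyMeasurable) (Filter.Eventually.of_forall fun x => ?_)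
  rw [Real.norm_eq_abs, abs_of_pos (Real.exp_pos _)]
  refine Real.exp_le_exp.2 ?_
  calc t * g x ≤ |t * g x| := le_abs_self _
  _ = |t| * |g x| := abs_mul _ _
  _ ≤ |t| * C := mul_le_mul_of_nonneg_left (hC x) (abs_nonneg t)

lemma integral_exp_mul_pos (P : Measure Ω) [IsProbabilityMeasure P] {g : Ω → ℝ}
    (hg : Measurable g) {C : ℝ} (hC : ∀ x, |g x| ≤ C) (t : ℝ) :
    0 < ∫ x, Real.exp (t * g x) ∂P := by
  have h1 : ∀ x, Real.exp (-(|t| * C)) ≤ Real.exp (t * g x) := fun x => by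
    refine Real.exp_le_exp.2 ?_
    have h2 : |t * g x| ≤ |t| * C := by
      rw [abs_mul]; exact mul_le_mul_of_nonneg_left (hC x) (abs_nonneg t)
    linarith [neg_abs_le (t * g x)]
  calc (0:ℝ) < Real.exp (-(|t| * C)) := Real.exp_pos _
  _ = ∫ _, Real.exp (-(|t| * C)) ∂P := by simp
  _ ≤ ∫ x, Real.exp (t * g x) ∂P :=
      integral_mono (integrable_const _) (integrable_exp_mul P hg hC t) h1

lemma lintegral_ofReal_exp (P : Measure Ω) [IsProbabilityMeasure P] {g : Ω → ℝ}
    (hg : Measurable g) {C : ℝ} (hC : ∀ x, |g x| ≤ C) (t : ℝ) :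
    ∫⁻ x, ENNReal.ofReal (Real.exp (t * g x)) ∂P
      = ENNReal.ofReal (∫ x, Real.exp (t * g x) ∂P) :=
  (MeasureTheory.ofReal_integral_eq_lintegral_ofReal (integrable_exp_mul P hg hC t)
    (Filter.Eventually.of_forall fun x => (Real.exp_pos _).le)).symm

lemma lintegral_rpow_mul_rpow_le {μ : Measure Ω} {F G : Ω → ℝ≥0∞}
    (hF : AEMeasurable F μ) (hG : AEMeasurable G μ) {a b : ℝ}
    (ha : 0 < a) (hb : 0 < b) (hab : a + b = 1) :
    ∫⁻ x, F x ^ a * G x ^ b ∂μ ≤ (∫⁻ x, F x ∂μ) ^ a * (∫⁻ x, G x ∂μ) ^ b := by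
  have hpq : (1/a).HolderConjugate (1/b) := by
    refine ⟨?_, by positivity, by positivity⟩
    rw [one_div, one_div, inv_inv, inv_inv, inv_one]; linarith
  have h := ENNReal.lintegral_mul_le_Lp_mul_Lq μ hpq (hF.pow_const a) (hG.pow_const b)
  simp only [Pi.mul_apply, ← ENNReal.rpow_mul, one_div, mul_inv_cancel₀ ha.ne',
    mul_inv_cancel₀ hb.ne', ENNReal.rpow_one, inv_inv] at h
  exact h

lemma log_le_of_le_rpow_mul {A B : ℝ} (hA : 0 < A) (hB : 0 < B) {K : ℝ≥0∞}
    (hK0 : K ≠ 0) (hKt : K ≠ ⊤) {a b : ℝ} (ha : 0 < a) (hb : 0 < b)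
    (h : ENNReal.ofReal A ≤ ENNReal.ofReal B ^ a * K ^ b) :
    Real.log A ≤ a * Real.log B + b * Real.log K.toReal := by
  have hk : 0 < K.toReal := ENNReal.toReal_pos hK0 hKt
  have hfin : ENNReal.ofReal B ^ a * K ^ b ≠ ⊤ :=
    ENNReal.mul_ne_top (ENNReal.rpow_ne_top_of_nonneg ha.le ENNReal.ofReal_ne_top)
      (ENNReal.rpow_ne_top_of_nonneg hb.le hKt)
  have h2 := ENNReal.toReal_mono hfin h
  rw [ENNReal.toReal_ofReal hA.le, ENNReal.toReal_mul, ← ENNReal.toReal_rpow,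
    ← ENNReal.toReal_rpow, ENNReal.toReal_ofReal hB.le] at h2
  have h3 := Real.log_le_log hA h2
  rwa [Real.log_mul (by positivity) (by positivity), Real.log_rpow hB, Real.log_rpow hk] at h3

lemma rpow_master {x y : ℝ≥0∞} (hx0 : x ≠ 0) (hxt : x ≠ ⊤) (hy0 : y ≠ 0) (hyt : y ≠ ⊤)
    (r : ℝ) (a₁ b₁ c₁ a₂ b₂ c₂ θ τ : ℝ) :
    (x ^ a₁ * y ^ b₁ * ENNReal.ofReal (Real.exp (c₁ * r))) ^ θ *
      (x ^ a₂ * y ^ b₂ * ENNReal.ofReal (Real.exp (c₂ * r))) ^ τ =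
    x ^ (a₁ * θ + a₂ * τ) * y ^ (b₁ * θ + b₂ * τ) *
      ENNReal.ofReal (Real.exp ((c₁ * θ + c₂ * τ) * r)) := by
  have hxr : ∀ u : ℝ, x ^ u ≠ ⊤ := fun u => by
    simp [ENNReal.rpow_eq_top_iff, hx0, hxt]
  have hyr : ∀ u : ℝ, y ^ u ≠ ⊤ := fun u => by
    simp [ENNReal.rpow_eq_top_iff, hy0, hyt]
  have hE : ∀ (c u : ℝ), ENNReal.ofReal (Real.exp (c * r)) ^ u
      = ENNReal.ofReal (Real.exp ((c * u) * r)) := fun c u => by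
    rw [ENNReal.ofReal_rpow_of_pos (Real.exp_pos _), ← Real.exp_mul,
      show c * r * u = c * u * r by ring]
  rw [ENNReal.mul_rpow_of_ne_top (ENNReal.mul_ne_top (hxr a₁) (hyr b₁)) ENNReal.ofReal_ne_top,
    ENNReal.mul_rpow_of_ne_top (hxr a₁) (hyr b₁),
    ENNReal.mul_rpow_of_ne_top (ENNReal.mul_ne_top (hxr a₂) (hyr b₂)) ENNReal.ofReal_ne_top,
    ENNReal.mul_rpow_of_ne_top (hxr a₂) (hyr b₂),
    ← ENNReal.rpow_mul, ← ENNReal.rpow_mul, ← ENNReal.rpow_mul, ← ENNReal.rpow_mul,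
    hE, hE, ENNReal.rpow_add _ _ hx0 hxt, ENNReal.rpow_add _ _ hy0 hyt,
    show (c₁ * θ + c₂ * τ) * r = c₁ * θ * r + (c₂ * τ * r) by ring, Real.exp_add,
    ENNReal.ofReal_mul (Real.exp_pos _).le]
  ring

lemma log_le_log_rpow_mul_rpow {X Y Z : ℝ≥0∞} (hX0 : X ≠ 0) (hY0 : Y ≠ 0) (hYt : Y ≠ ⊤)
    (hZ0 : Z ≠ 0) (hZt : Z ≠ ⊤) {a b : ℝ} (ha : 0 < a) (hb : 0 < b)
    (h : X ≤ Y ^ a * Z ^ b) :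
    Real.log X.toReal ≤ a * Real.log Y.toReal + b * Real.log Z.toReal := by
  have hy : 0 < Y.toReal := ENNReal.toReal_pos hY0 hYt
  have hz : 0 < Z.toReal := ENNReal.toReal_pos hZ0 hZt
  have hfin : Y ^ a * Z ^ b ≠ ⊤ :=
    ENNReal.mul_ne_top (ENNReal.rpow_ne_top_of_nonneg ha.le hYt)
      (ENNReal.rpow_ne_top_of_nonneg hb.le hZt)
  have hXt : X ≠ ⊤ := ne_top_of_le_ne_top hfin h
  have hx : 0 < X.toReal := ENNReal.toReal_pos hX0 hXt
  have h2 := ENNReal.toReal_mono hfin h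
  rw [ENNReal.toReal_mul, ← ENNReal.toReal_rpow, ← ENNReal.toReal_rpow] at h2
  have h3 := Real.log_le_log hx h2
  rwa [Real.log_mul (by positivity) (by positivity), Real.log_rpow hy, Real.log_rpow hz] at h3

lemma ineq_key (P Q : Measure Ω) [IsProbabilityMeasure P] [IsProbabilityMeasure Q]
    {g : Ω → ℝ} (hg : Measurable g) {C : ℝ} (hC : ∀ x, |g x| ≤ C)
    {β γ : ℝ} (hβ : β ≠ 0) (hγ : γ ≠ 0) (hβγ : β < γ) :
    ((β⁻¹ * Real.log (∫ x, Real.exp (β * g x) ∂P) : ℝ) : EReal) ≤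
      ((γ⁻¹ * Real.log (∫ x, Real.exp (γ * g x) ∂Q) : ℝ) : EReal)
        + (((γ - β)⁻¹ : ℝ) : EReal) * renyiDiv (γ / (γ - β)) P Q := by
  have hgb : 0 < γ - β := sub_pos.2 hβγ
  set α : ℝ := γ / (γ - β) with hα
  have hα' : α ≠ 0 := div_ne_zero hγ hgb.ne'
  have h1α : (1 : ℝ) - α ≠ 0 := by
    rw [hα]; intro h; apply hβ
    rw [sub_eq_zero, eq_comm, div_eq_one_iff_eq hgb.ne'] at h
    linarith
  have hc : (γ - β)⁻¹ * (α * (α - 1))⁻¹ = (γ - β) / (γ * β) := by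
    rw [← mul_inv, hα, eq_div_iff (mul_ne_zero hγ hβ), inv_mul_eq_div,
      div_eq_iff (by
        have h1 : γ / (γ - β) * (γ / (γ - β) - 1) = γ * β / ((γ - β) * (γ - β)) := by
          field_simp; try ring
        rw [h1]
        exact mul_ne_zero hgb.ne' (div_ne_zero (mul_ne_zero hγ hβ)
          (mul_ne_zero hgb.ne' hgb.ne')))]
    field_simp
    try ring
  have he1 : (γ - β) / (γ * β) * α = β⁻¹ := by
    rw [hα]; field_simp; try ring
  have he2 : (γ - β) / (γ * β) * (1 - α) = -γ⁻¹ := by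
    rw [hα]; field_simp; try ring
  have he3 : γ⁻¹ * (1 - α)⁻¹ = -((γ - β) / (γ * β)) := by
    rw [← mul_inv, hα,
      show γ * (1 - γ / (γ - β)) = -(γ * β) / (γ - β) by field_simp; try ring,
      inv_div, div_neg]
  have he4 : β⁻¹ * α⁻¹ = (γ - β) / (γ * β) := by
    rw [← mul_inv, hα,
      show β * (γ / (γ - β)) = γ * β / (γ - β) by field_simp; try ring,
      inv_div]
  have hflip : ((1 - α) * (1 - α - 1))⁻¹ = (α * (α - 1))⁻¹ := by
    rw [show (1 - α) * (1 - α - 1) = α * (α - 1) by ring]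
  set A := ∫ x, Real.exp (β * g x) ∂P with hA_def
  set B := ∫ x, Real.exp (γ * g x) ∂Q with hB_def
  have hA : 0 < A := integral_exp_mul_pos P hg hC β
  have hB : 0 < B := integral_exp_mul_pos Q hg hC γ
  set ν := P + Q with hν
  have hPν : P ≪ ν := (Measure.le_add_right le_rfl).absolutelyContinuous
  have hQν : Q ≪ ν := (Measure.le_add_left le_rfl).absolutelyContinuous
  have hp : Measurable (P.rnDeriv ν) := Measure.measurable_rnDeriv _ _
  have hq : Measurable (Q.rnDeriv ν) := Measure.measurable_rnDeriv _ _
  have hplt : ∀ᵐ x ∂ν, P.rnDeriv ν x < ⊤ := Measure.rnDeriv_lt_top P ν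
  have hqlt : ∀ᵐ x ∂ν, Q.rnDeriv ν x < ⊤ := Measure.rnDeriv_lt_top Q ν
  have hEmeas : ∀ t : ℝ, Measurable fun x => ENNReal.ofReal (Real.exp (t * g x)) :=
    fun t => ((hg.const_mul t).exp).ennreal_ofReal
  have hPint : ∫⁻ x, P.rnDeriv ν x * ENNReal.ofReal (Real.exp (β * g x)) ∂ν
      = ENNReal.ofReal A := by
    rw [lintegral_rnDeriv_mul hPν (hEmeas β).aemeasurable]
    exact lintegral_ofReal_exp P hg hC β
  have hQint : ∫⁻ x, Q.rnDeriv ν x * ENNReal.ofReal (Real.exp (γ * g x)) ∂ν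
      = ENNReal.ofReal B := by
    rw [lintegral_rnDeriv_mul hQν (hEmeas γ).aemeasurable]
    exact lintegral_ofReal_exp Q hg hC γ
  rcases lt_or_gt_of_ne hγ with hγneg | hγpos
  · -- Case γ < 0
    have hβneg : β < 0 := hβγ.trans hγneg
    have hαneg : α < 0 := div_neg_of_neg_of_pos hγneg hgb
    rw [renyiDiv, if_pos hαneg, renyiDivAux]
    by_cases hQP : Q ≪ P
    swap
    · rw [if_pos ⟨by linarith, hQP⟩, EReal.coe_mul_top_of_pos (by positivity),
        EReal.add_top_of_ne_bot (EReal.coe_ne_bot _)]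
      exact le_top
    rw [if_neg (by simp [hQP]), ← hν]
    have hppos : ∀ᵐ x ∂ν, 0 < P.rnDeriv ν x := by
      rw [hν, MeasureTheory.ae_add_measure_iff]
      exact ⟨Measure.rnDeriv_pos hPν, (Measure.rnDeriv_pos hPν).filter_mono hQP.ae_le⟩
    rw [Measure.restrict_congr_set (Filter.eventuallyEq_univ.mpr hppos), Measure.restrict_univ]
    set K := ∫⁻ x, Q.rnDeriv ν x ^ (1 - α) * P.rnDeriv ν x ^ (1 - (1 - α)) ∂ν with hK_def
    have ha : 0 < γ / β := div_pos_iff.2 (Or.inr ⟨hγneg, hβneg⟩)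
    have hb : 0 < (1 - α)⁻¹ := by
      rw [inv_pos, hα]; rw [sub_pos, div_lt_one hgb]; linarith
    have hab : γ / β + (1 - α)⁻¹ = 1 := by
      rw [hα]; field_simp [hβ, hγ, hgb.ne']; try ring
    have key : ENNReal.ofReal B ≤ ENNReal.ofReal A ^ (γ / β) * K ^ (1 - α)⁻¹ := by
      calc ENNReal.ofReal B
          = ∫⁻ x, Q.rnDeriv ν x * ENNReal.ofReal (Real.exp (γ * g x)) ∂ν := hQint.symm
        _ = ∫⁻ x, (P.rnDeriv ν x * ENNReal.ofReal (Real.exp (β * g x))) ^ (γ / β)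
              * (Q.rnDeriv ν x ^ (1 - α) * P.rnDeriv ν x ^ (1 - (1 - α))) ^ (1 - α)⁻¹ ∂ν := by
            refine lintegral_congr_ae ?_
            filter_upwards [hplt, hqlt, hppos] with x hpx hqx hpp
            rcases eq_or_ne (Q.rnDeriv ν x) 0 with hq0 | hq0
            · rw [hq0, zero_mul, ENNReal.zero_rpow_of_pos (by
                  rw [inv_pos] at hb; exact hb), zero_mul,
                ENNReal.zero_rpow_of_pos hb, mul_zero]
            · have hm := rpow_master hpp.ne' hpx.ne hq0 hqx.ne (g x)
                1 0 β (1 - (1 - α)) (1 - α) 0 (γ / β) (1 - α)⁻¹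
              rw [show 1 * (γ / β) + (1 - (1 - α)) * (1 - α)⁻¹ = 0 by
                  rw [hα]; field_simp [hβ, hγ, hgb.ne']; ring,
                show 0 * (γ / β) + (1 - α) * (1 - α)⁻¹ = 1 by field_simp [h1α]; ring,
                show (β * (γ / β) + 0 * (1 - α)⁻¹) = γ by field_simp [hβ]; ring] at hm
              simp only [ENNReal.rpow_zero, ENNReal.rpow_one, one_mul, mul_one, zero_mul,
                Real.exp_zero, ENNReal.ofReal_one] at hm
              rw [mul_comm (Q.rnDeriv ν x ^ (1 - α)) (P.rnDeriv ν x ^ (1 - (1 - α)))]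
              exact hm.symm
        _ ≤ (∫⁻ x, P.rnDeriv ν x * ENNReal.ofReal (Real.exp (β * g x)) ∂ν) ^ (γ / β)
              * K ^ (1 - α)⁻¹ := by
            rw [hK_def]
            exact lintegral_rpow_mul_rpow_le
              ((hp.mul (hEmeas β)).aemeasurable)
              (((hq.pow_const _).mul (hp.pow_const _)).aemeasurable) ha hb hab
        _ = ENNReal.ofReal A ^ (γ / β) * K ^ (1 - α)⁻¹ := by rw [hPint]
    rcases eq_or_ne K 0 with hK0 | hK0
    · exfalso
      rw [hK0, ENNReal.zero_rpow_of_pos hb, mul_zero, le_zero_iff] at key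
      exact (ENNReal.ofReal_pos.2 hB).ne' key
    rcases eq_or_ne K ⊤ with hKt | hKt
    · rw [hKt, ENNReal.log_top, EReal.coe_mul_top_of_pos
        (inv_pos.2 (mul_pos (by linarith) (by linarith))),
        EReal.coe_mul_top_of_pos (by positivity),
        EReal.add_top_of_ne_bot (EReal.coe_ne_bot _)]
      exact le_top
    · have hlog := log_le_log_rpow_mul_rpow (ENNReal.ofReal_pos.2 hB).ne'
        (ENNReal.ofReal_pos.2 hA).ne' ENNReal.ofReal_ne_top hK0 hKt ha hb key
      rw [ENNReal.toReal_ofReal hB.le, ENNReal.toReal_ofReal hA.le] at hlog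
      rw [ENNReal.log_pos_real' (ENNReal.toReal_pos hK0 hKt), ← EReal.coe_mul, ← EReal.coe_mul,
        ← EReal.coe_add, EReal.coe_le_coe_iff]
      have h' := mul_le_mul_of_nonpos_left hlog (le_of_lt (inv_neg''.2 hγneg))
      rw [mul_add, ← mul_assoc, ← mul_assoc,
        show γ⁻¹ * (γ / β) = β⁻¹ by field_simp; try ring, he3] at h'
      rw [hflip, ← mul_assoc, hc]
      linarith [h']
  · -- Case γ > 0
    have hα0 : 0 < α := div_pos hγpos hgb
    rw [renyiDiv, if_neg (not_lt.2 hα0.le), renyiDivAux,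
      show Q + P = ν from (add_comm Q P).trans hν.symm]
    rcases lt_or_gt_of_ne hβ with hβneg | hβpos
    · -- Case β < 0 < γ
      have hα1 : α < 1 := by rw [hα, div_lt_one hgb]; linarith
      rw [if_neg (fun h => absurd h.1 (not_lt.2 hα1.le))]
      set K := ∫⁻ x in {x | 0 < Q.rnDeriv ν x},
        P.rnDeriv ν x ^ α * Q.rnDeriv ν x ^ (1 - α) ∂ν with hK_def
      have key : K ≤ ENNReal.ofReal A ^ α * ENNReal.ofReal B ^ (1 - α) := by
        calc K ≤ ∫⁻ x, P.rnDeriv ν x ^ α * Q.rnDeriv ν x ^ (1 - α) ∂ν :=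
              setLIntegral_le_lintegral _ _
          _ = ∫⁻ x, (P.rnDeriv ν x * ENNReal.ofReal (Real.exp (β * g x))) ^ α
                * (Q.rnDeriv ν x * ENNReal.ofReal (Real.exp (γ * g x))) ^ (1 - α) ∂ν := by
              refine lintegral_congr_ae ?_
              filter_upwards [hplt, hqlt] with x hpx hqx
              rcases eq_or_ne (P.rnDeriv ν x) 0 with hp0 | hp0
              · rw [hp0, ENNReal.zero_rpow_of_pos hα0, zero_mul, zero_mul,
                  ENNReal.zero_rpow_of_pos hα0, zero_mul]
              rcases eq_or_ne (Q.rnDeriv ν x) 0 with hq0 | hq0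
              · rw [hq0, ENNReal.zero_rpow_of_pos (by linarith : (0:ℝ) < 1 - α), mul_zero,
                  zero_mul, ENNReal.zero_rpow_of_pos (by linarith : (0:ℝ) < 1 - α), mul_zero]
              · have hm := rpow_master hp0 hpx.ne hq0 hqx.ne (g x)
                  1 0 β 0 1 γ α (1 - α)
                rw [show 1 * α + 0 * (1 - α) = α by ring,
                  show 0 * α + 1 * (1 - α) = 1 - α by ring,
                  show (β * α + γ * (1 - α)) = 0 by rw [hα]; field_simp [hγ, hgb.ne']; try ring]
                  at hm
                simp only [ENNReal.rpow_zero, ENNReal.rpow_one, one_mul, mul_one, zero_mul,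
                  Real.exp_zero, ENNReal.ofReal_one] at hm
                exact hm.symm
          _ ≤ (∫⁻ x, P.rnDeriv ν x * ENNReal.ofReal (Real.exp (β * g x)) ∂ν) ^ α
                * (∫⁻ x, Q.rnDeriv ν x * ENNReal.ofReal (Real.exp (γ * g x)) ∂ν) ^ (1 - α) :=
              lintegral_rpow_mul_rpow_le ((hp.mul (hEmeas β)).aemeasurable)
                ((hq.mul (hEmeas γ)).aemeasurable) hα0 (by linarith) (by ring)
          _ = ENNReal.ofReal A ^ α * ENNReal.ofReal B ^ (1 - α) := by rw [hPint, hQint]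
      rcases eq_or_ne K 0 with hK0 | hK0
      · rw [hK0, ENNReal.log_zero,
          EReal.coe_mul_bot_of_neg (inv_neg''.2 (mul_neg_of_pos_of_neg hα0 (by linarith))),
          EReal.coe_mul_top_of_pos (by positivity),
          EReal.add_top_of_ne_bot (EReal.coe_ne_bot _)]
        exact le_top
      have hKt : K ≠ ⊤ := ne_top_of_le_ne_top
        (ENNReal.mul_ne_top (ENNReal.rpow_ne_top_of_nonneg hα0.le ENNReal.ofReal_ne_top)
          (ENNReal.rpow_ne_top_of_nonneg (by linarith) ENNReal.ofReal_ne_top)) key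
      have hlog := log_le_log_rpow_mul_rpow hK0 (ENNReal.ofReal_pos.2 hA).ne'
        ENNReal.ofReal_ne_top (ENNReal.ofReal_pos.2 hB).ne' ENNReal.ofReal_ne_top
        hα0 (by linarith : (0:ℝ) < 1 - α) key
      rw [ENNReal.toReal_ofReal hB.le, ENNReal.toReal_ofReal hA.le] at hlog
      rw [ENNReal.log_pos_real' (ENNReal.toReal_pos hK0 hKt), ← EReal.coe_mul, ← EReal.coe_mul,
        ← EReal.coe_add, EReal.coe_le_coe_iff]
      have hD : (γ - β) / (γ * β) < 0 :=
        div_neg_of_pos_of_neg hgb (mul_neg_of_pos_of_neg hγpos hβneg)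
      have h' := mul_le_mul_of_nonpos_left hlog hD.le
      rw [mul_add, ← mul_assoc, ← mul_assoc, he1, he2] at h'
      rw [← mul_assoc, hc]
      linarith [h']
    · -- Case 0 < β < γ
      have hα1 : 1 < α := by rw [hα, lt_div_iff₀ hgb]; linarith
      by_cases hPQ : P ≪ Q
      swap
      · rw [if_pos ⟨hα1, hPQ⟩, EReal.coe_mul_top_of_pos (by positivity),
          EReal.add_top_of_ne_bot (EReal.coe_ne_bot _)]
        exact le_top
      rw [if_neg (by simp [hPQ])]
      have hqpos : ∀ᵐ x ∂ν, 0 < Q.rnDeriv ν x := by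
        rw [hν, MeasureTheory.ae_add_measure_iff]
        exact ⟨(Measure.rnDeriv_pos hQν).filter_mono hPQ.ae_le, Measure.rnDeriv_pos hQν⟩
      rw [Measure.restrict_congr_set (Filter.eventuallyEq_univ.mpr hqpos), Measure.restrict_univ]
      set K := ∫⁻ x, P.rnDeriv ν x ^ α * Q.rnDeriv ν x ^ (1 - α) ∂ν with hK_def
      have ha : 0 < β / γ := div_pos hβpos hγpos
      have hb : 0 < α⁻¹ := inv_pos.2 hα0
      have hab : β / γ + α⁻¹ = 1 := by rw [hα]; field_simp [hγ, hgb.ne']; try ring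
      have key : ENNReal.ofReal A ≤ ENNReal.ofReal B ^ (β / γ) * K ^ α⁻¹ := by
        calc ENNReal.ofReal A
            = ∫⁻ x, P.rnDeriv ν x * ENNReal.ofReal (Real.exp (β * g x)) ∂ν := hPint.symm
          _ = ∫⁻ x, (Q.rnDeriv ν x * ENNReal.ofReal (Real.exp (γ * g x))) ^ (β / γ)
                * (P.rnDeriv ν x ^ α * Q.rnDeriv ν x ^ (1 - α)) ^ α⁻¹ ∂ν := by
              refine lintegral_congr_ae ?_
              filter_upwards [hplt, hqlt, hqpos] with x hpx hqx hqp
              rcases eq_or_ne (P.rnDeriv ν x) 0 with hp0 | hp0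
              · rw [hp0, zero_mul, ENNReal.zero_rpow_of_pos hα0, zero_mul,
                  ENNReal.zero_rpow_of_pos hb, mul_zero]
              · have hm := rpow_master hp0 hpx.ne hqp.ne' hqx.ne (g x)
                  0 1 γ α (1 - α) 0 (β / γ) α⁻¹
                rw [show 0 * (β / γ) + α * α⁻¹ = 1 by field_simp [hα']; ring,
                  show 1 * (β / γ) + (1 - α) * α⁻¹ = 0 by
                    rw [hα]; field_simp [hβ, hγ, hgb.ne']; try ring,
                  show (γ * (β / γ) + 0 * α⁻¹) = β by field_simp [hγ]; ring] at hm
                simp only [ENNReal.rpow_zero, ENNReal.rpow_one, one_mul, mul_one, zero_mul,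
                  Real.exp_zero, ENNReal.ofReal_one] at hm
                exact hm.symm
          _ ≤ (∫⁻ x, Q.rnDeriv ν x * ENNReal.ofReal (Real.exp (γ * g x)) ∂ν) ^ (β / γ)
                * K ^ α⁻¹ := by
              rw [hK_def]
              exact lintegral_rpow_mul_rpow_le ((hq.mul (hEmeas γ)).aemeasurable)
                (((hp.pow_const _).mul (hq.pow_const _)).aemeasurable) ha hb hab
          _ = ENNReal.ofReal B ^ (β / γ) * K ^ α⁻¹ := by rw [hQint]
      rcases eq_or_ne K 0 with hK0 | hK0
      · exfalso
        rw [hK0, ENNReal.zero_rpow_of_pos hb, mul_zero, le_zero_iff] at key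
        exact (ENNReal.ofReal_pos.2 hA).ne' key
      rcases eq_or_ne K ⊤ with hKt | hKt
      · rw [hKt, ENNReal.log_top,
          EReal.coe_mul_top_of_pos (inv_pos.2 (mul_pos hα0 (by linarith))),
          EReal.coe_mul_top_of_pos (by positivity),
          EReal.add_top_of_ne_bot (EReal.coe_ne_bot _)]
        exact le_top
      · have hlog := log_le_log_rpow_mul_rpow (ENNReal.ofReal_pos.2 hA).ne'
          (ENNReal.ofReal_pos.2 hB).ne' ENNReal.ofReal_ne_top hK0 hKt ha hb key
        rw [ENNReal.toReal_ofReal hB.le, ENNReal.toReal_ofReal hA.le] at hlog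
        rw [ENNReal.log_pos_real' (ENNReal.toReal_pos hK0 hKt), ← EReal.coe_mul, ← EReal.coe_mul,
          ← EReal.coe_add, EReal.coe_le_coe_iff]
        have h' := mul_le_mul_of_nonneg_left hlog (inv_pos.2 hβpos).le
        rw [mul_add, ← mul_assoc, ← mul_assoc,
          show β⁻¹ * (β / γ) = γ⁻¹ by field_simp; try ring, he4] at h'
        rw [← mul_assoc, hc]
        linarith [h']

/-- Gibbs tilting of `P` by `e^{s g}`. -/
noncomputable def gibbs (P : Measure Ω) (g : Ω → ℝ) (s : ℝ) : Measure Ω :=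
  P.withDensity (fun x => ENNReal.ofReal (Real.exp (s * g x) / ∫ y, Real.exp (s * g y) ∂P))

variable {P : Measure Ω} [IsProbabilityMeasure P] {g : Ω → ℝ} {C : ℝ}

lemma gibbs_prob (hg : Measurable g) (hC : ∀ x, |g x| ≤ C) (s : ℝ) :
    IsProbabilityMeasure (gibbs P g s) := by
  constructor
  have hZ : 0 < ∫ y, Real.exp (s * g y) ∂P := integral_exp_mul_pos P hg hC s
  simp only [gibbs]
  rw [withDensity_apply _ MeasurableSet.univ, setLIntegral_univ,
    ← MeasureTheory.ofReal_integral_eq_lintegral_ofReal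
      ((integrable_exp_mul P hg hC s).div_const _)
      (Filter.Eventually.of_forall fun x => div_nonneg (Real.exp_pos _).le hZ.le),
    integral_div, div_self hZ.ne', ENNReal.ofReal_one]

lemma gibbs_ac (s : ℝ) : gibbs P g s ≪ P := withDensity_absolutelyContinuous _ _

lemma ac_gibbs (hg : Measurable g) (hC : ∀ x, |g x| ≤ C) (s : ℝ) : P ≪ gibbs P g s := by
  have hZ : 0 < ∫ y, Real.exp (s * g y) ∂P := integral_exp_mul_pos P hg hC s
  refine Measure.AbsolutelyContinuous.mk fun A hA h0 => ?_
  simp only [gibbs] at h0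
  rw [withDensity_apply _ hA] at h0
  set c := ENNReal.ofReal (Real.exp (-(|s| * C)) / ∫ y, Real.exp (s * g y) ∂P) with hc
  have hcpos : 0 < c := ENNReal.ofReal_pos.2 (div_pos (Real.exp_pos _) hZ)
  have hle : c * P A ≤ ∫⁻ x in A, ENNReal.ofReal
      (Real.exp (s * g x) / ∫ y, Real.exp (s * g y) ∂P) ∂P := by
    rw [← setLIntegral_const A c]
    refine setLIntegral_mono' hA fun x _ => ?_
    refine ENNReal.ofReal_le_ofReal
      ((div_le_div_iff_of_pos_right hZ).2 (Real.exp_le_exp.2 ?_))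
    have h2 : |s * g x| ≤ |s| * C := by
      rw [abs_mul]; exact mul_le_mul_of_nonneg_left (hC x) (abs_nonneg s)
    linarith [neg_abs_le (s * g x)]
  rw [h0, le_zero_iff, mul_eq_zero] at hle
  exact hle.resolve_left hcpos.ne'

lemma integral_exp_gibbs (hg : Measurable g) (hC : ∀ x, |g x| ≤ C) (s t : ℝ) :
    ∫ x, Real.exp (t * g x) ∂(gibbs P g s)
      = (∫ y, Real.exp (s * g y) ∂P)⁻¹ * ∫ x, Real.exp ((t + s) * g x) ∂P := by
  have hZ : 0 < ∫ y, Real.exp (s * g y) ∂P := integral_exp_mul_pos P hg hC s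
  haveI := gibbs_prob hg hC (P := P) s
  refine (ENNReal.ofReal_eq_ofReal_iff
    (integral_nonneg fun x => (Real.exp_pos _).le)
    (mul_nonneg (inv_nonneg.2 hZ.le)
      (integral_nonneg fun x => (Real.exp_pos _).le))).1 ?_
  rw [← lintegral_ofReal_exp (gibbs P g s) hg hC t]
  simp only [gibbs]
  rw [lintegral_withDensity_eq_lintegral_mul _
      (((hg.const_mul s).exp.div_const _).ennreal_ofReal) ((hg.const_mul t).exp.ennreal_ofReal)]
  have hpt : ∀ x : Ω, (ENNReal.ofReal (Real.exp (s * g x) / ∫ y, Real.exp (s * g y) ∂P)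
        * ENNReal.ofReal (Real.exp (t * g x)))
      = ENNReal.ofReal (∫ y, Real.exp (s * g y) ∂P)⁻¹
        * ENNReal.ofReal (Real.exp ((t + s) * g x)) := fun x => by
    rw [← ENNReal.ofReal_mul (div_nonneg (Real.exp_pos _).le hZ.le),
      ← ENNReal.ofReal_mul (inv_nonneg.2 hZ.le)]
    congr 1
    rw [div_mul_eq_mul_div, ← Real.exp_add, div_eq_inv_mul]
    congr 2
    ring
  simp only [Pi.mul_apply, hpt]
  rw [lintegral_const_mul' _ _ ENNReal.ofReal_ne_top, lintegral_ofReal_exp P hg hC (t + s),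
    ← ENNReal.ofReal_mul (by positivity)]

lemma gibbs_derivs (hg : Measurable g) (hC : ∀ x, |g x| ≤ C) (s : ℝ) :
    (∀ᵐ x ∂(P + gibbs P g s), 0 < P.rnDeriv (P + gibbs P g s) x) ∧
    (∀ᵐ x ∂(P + gibbs P g s), 0 < (gibbs P g s).rnDeriv (P + gibbs P g s) x) ∧
    ∀ u : ℝ, (∫⁻ x, (gibbs P g s).rnDeriv (P + gibbs P g s) x ^ u
        * P.rnDeriv (P + gibbs P g s) x ^ (1 - u) ∂(P + gibbs P g s))
      = ENNReal.ofReal (((∫ y, Real.exp (s * g y) ∂P) ^ u)⁻¹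
          * ∫ x, Real.exp ((u * s) * g x) ∂P) := by
  haveI := gibbs_prob hg hC (P := P) s
  have hZ : 0 < ∫ y, Real.exp (s * g y) ∂P := integral_exp_mul_pos P hg hC s
  set Z := ∫ y, Real.exp (s * g y) ∂P with hZ_def
  set ρ : Ω → ℝ≥0∞ := fun x => ENNReal.ofReal (Real.exp (s * g x) / Z) with hρ_def
  have hρmeas : Measurable ρ := ((hg.const_mul s).exp.div_const _).ennreal_ofReal
  have hρ0 : ∀ x, ρ x ≠ 0 := fun x =>
    (ENNReal.ofReal_pos.2 (div_pos (Real.exp_pos _) hZ)).ne'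
  have hρt : ∀ x, ρ x ≠ ⊤ := fun x => ENNReal.ofReal_ne_top
  set w : Ω → ℝ≥0∞ := fun x => 1 + ρ x with hw_def
  have hwmeas : Measurable w := measurable_const.add hρmeas
  have hw0 : ∀ x, w x ≠ 0 := fun x => by
    simp only [hw_def]
    simp
  have hwt : ∀ x, w x ≠ ⊤ := fun x => ENNReal.add_ne_top.2 ⟨ENNReal.one_ne_top, hρt x⟩
  have hwinv : Measurable fun x => (w x)⁻¹ := hwmeas.inv
  set ν := P + gibbs P g s with hν_def
  have hgibbs : gibbs P g s = P.withDensity ρ := rfl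
  have hν_eq : ν = P.withDensity w := by
    rw [hν_def, hgibbs]
    have h2 : P.withDensity w = P.withDensity 1 + P.withDensity ρ := by
      rw [← withDensity_add_right _ hρmeas]; rfl
    rw [h2, withDensity_one]
  have hP_eq : ν.withDensity (fun x => (w x)⁻¹) = P := by
    rw [hν_eq, ← withDensity_mul _ hwmeas hwinv,
      show (w * fun x => (w x)⁻¹) = (1 : Ω → ℝ≥0∞) from
        funext fun x => ENNReal.mul_inv_cancel (hw0 x) (hwt x),
      withDensity_one]
  have hQ_eq : ν.withDensity (fun x => ρ x * (w x)⁻¹) = gibbs P g s := by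
    rw [hν_eq, ← withDensity_mul _ (g := fun x => ρ x * (w x)⁻¹) hwmeas (hρmeas.mul hwinv), hgibbs]
    congr 1
    funext x
    show w x * (ρ x * (w x)⁻¹) = ρ x
    rw [mul_comm (ρ x), ← mul_assoc, ENNReal.mul_inv_cancel (hw0 x) (hwt x), one_mul]
  have hPd : P.rnDeriv ν =ᵐ[ν] fun x => (w x)⁻¹ := by
    have h := Measure.rnDeriv_withDensity ν hwinv
    rwa [hP_eq] at h
  have hQd : (gibbs P g s).rnDeriv ν =ᵐ[ν] fun x => ρ x * (w x)⁻¹ := by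
    have h := Measure.rnDeriv_withDensity ν (f := fun x => ρ x * (w x)⁻¹) (hρmeas.mul hwinv)
    rwa [hQ_eq] at h
  refine ⟨?_, ?_, ?_⟩
  · filter_upwards [hPd] with x hx
    rw [hx]
    exact ENNReal.inv_pos.2 (hwt x)
  · filter_upwards [hQd] with x hx
    rw [hx]
    exact ENNReal.mul_pos (hρ0 x) (ENNReal.inv_pos.2 (hwt x)).ne'
  · intro u
    calc (∫⁻ x, (gibbs P g s).rnDeriv ν x ^ u * P.rnDeriv ν x ^ (1 - u) ∂ν)
        = ∫⁻ x, (ρ x * (w x)⁻¹) ^ u * ((w x)⁻¹) ^ (1 - u) ∂ν := by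
          refine lintegral_congr_ae ?_
          filter_upwards [hPd, hQd] with x h1 h2
          rw [h1, h2]
      _ = ∫⁻ x, w x * ((ρ x * (w x)⁻¹) ^ u * ((w x)⁻¹) ^ (1 - u)) ∂P := by
          rw [hν_eq, lintegral_withDensity_eq_lintegral_mul _ hwmeas
            (g := fun x => (ρ x * (w x)⁻¹) ^ u * ((w x)⁻¹) ^ (1 - u))
            (((hρmeas.mul hwinv).pow_const _).mul (hwinv.pow_const _))]
          rfl
      _ = ∫⁻ x, ρ x ^ u ∂P := by
          refine lintegral_congr fun x => ?_
          rw [ENNReal.mul_rpow_of_ne_top (hρt x) (ENNReal.inv_ne_top.2 (hw0 x)), mul_assoc,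
            ← ENNReal.rpow_add _ _ (ENNReal.inv_ne_zero.2 (hwt x)) (ENNReal.inv_ne_top.2 (hw0 x)),
            show u + (1 - u) = 1 by ring, ENNReal.rpow_one, mul_comm (ρ x ^ u), ← mul_assoc,
            ENNReal.mul_inv_cancel (hw0 x) (hwt x), one_mul]
      _ = ∫⁻ x, ENNReal.ofReal ((Z ^ u)⁻¹ * Real.exp ((u * s) * g x)) ∂P := by
          refine lintegral_congr fun x => ?_
          rw [hρ_def, ENNReal.ofReal_rpow_of_pos (div_pos (Real.exp_pos _) hZ)]
          congr 1
          rw [Real.div_rpow (Real.exp_pos _).le hZ.le, ← Real.exp_mul, div_eq_inv_mul,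
            show s * g x * u = (u * s) * g x by ring]
      _ = ENNReal.ofReal ((Z ^ u)⁻¹ * ∫ x, Real.exp ((u * s) * g x) ∂P) := by
          have hZu : (0:ℝ) < Z ^ u := Real.rpow_pos_of_pos hZ u
          simp_rw [ENNReal.ofReal_mul (inv_nonneg.2 hZu.le)]
          rw [lintegral_const_mul' _ _ ENNReal.ofReal_ne_top,
            lintegral_ofReal_exp P hg hC (u * s),
            ← ENNReal.ofReal_mul (inv_nonneg.2 hZu.le)]

lemma inf_attained (P : Measure Ω) [IsProbabilityMeasure P] {g : Ω → ℝ} (hg : Measurable g)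
    {C : ℝ} (hC : ∀ x, |g x| ≤ C) {β γ : ℝ} (hβ : β ≠ 0) (hγ : γ ≠ 0) (hβγ : β < γ) :
    ((β⁻¹ * Real.log (∫ x, Real.exp (β * g x) ∂P) : ℝ) : EReal) =
      ((γ⁻¹ * Real.log (∫ x, Real.exp (γ * g x) ∂(gibbs P g (β - γ))) : ℝ) : EReal)
        + (((γ - β)⁻¹ : ℝ) : EReal) * renyiDiv (γ / (γ - β)) P (gibbs P g (β - γ)) := by
  have hgb : 0 < γ - β := sub_pos.2 hβγ
  set α : ℝ := γ / (γ - β) with hα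
  have hc : (γ - β)⁻¹ * (α * (α - 1))⁻¹ = (γ - β) / (γ * β) := by
    rw [← mul_inv, hα, eq_div_iff (mul_ne_zero hγ hβ), inv_mul_eq_div,
      div_eq_iff (by
        have h1 : γ / (γ - β) * (γ / (γ - β) - 1) = γ * β / ((γ - β) * (γ - β)) := by
          field_simp; try ring
        rw [h1]
        exact mul_ne_zero hgb.ne' (div_ne_zero (mul_ne_zero hγ hβ)
          (mul_ne_zero hgb.ne' hgb.ne')))]
    field_simp
    try ring
  have he2 : (γ - β) / (γ * β) * (1 - α) = -γ⁻¹ := by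
    rw [hα]; field_simp; try ring
  have he5 : γ⁻¹ + (γ - β) / (γ * β) = β⁻¹ := by
    field_simp; try ring
  set Q := gibbs P g (β - γ) with hQ_def
  obtain ⟨hPd_pos, hQd_pos, hcore⟩ := gibbs_derivs (P := P) hg hC (β - γ)
  haveI hQprob := gibbs_prob (P := P) hg hC (β - γ)
  have hQP : Q ≪ P := gibbs_ac (β - γ)
  have hPQ : P ≪ Q := ac_gibbs hg hC (β - γ)
  set Z := ∫ y, Real.exp ((β - γ) * g y) ∂P with hZ_def
  have hZ : 0 < Z := integral_exp_mul_pos P hg hC (β - γ)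
  set A := ∫ x, Real.exp (β * g x) ∂P with hA_def
  have hA : 0 < A := integral_exp_mul_pos P hg hC β
  have hBQ : ∫ x, Real.exp (γ * g x) ∂Q = Z⁻¹ * A := by
    rw [hQ_def, integral_exp_gibbs hg hC (β - γ) γ, show γ + (β - γ) = β by ring, ← hZ_def,
      ← hA_def]
  have hKval := hcore (1 - α)
  rw [show ((1 - α) * (β - γ)) = β by rw [hα]; field_simp; try ring, ← hA_def]
    at hKval
  have hKpos : (0:ℝ) < (Z ^ (1 - α))⁻¹ * A :=
    mul_pos (inv_pos.2 (Real.rpow_pos_of_pos hZ _)) hA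
  have hlogK : Real.log ((Z ^ (1 - α))⁻¹ * A) = -((1 - α) * Real.log Z) + Real.log A := by
    rw [Real.log_mul (inv_ne_zero (Real.rpow_pos_of_pos hZ _).ne') hA.ne', Real.log_inv,
      Real.log_rpow hZ]
  have hfinal : β⁻¹ * Real.log A
      = γ⁻¹ * Real.log (Z⁻¹ * A)
        + (γ - β)⁻¹ * ((α * (α - 1))⁻¹ * (-((1 - α) * Real.log Z) + Real.log A)) := by
    rw [Real.log_mul (inv_ne_zero hZ.ne') hA.ne', Real.log_inv, ← mul_assoc, hc]
    linear_combination (Real.log Z) * he2 - (Real.log A) * he5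
  rw [hBQ]
  rcases lt_or_gt_of_ne hγ with hγneg | hγpos
  · -- γ < 0 : renyiDiv α P Q = renyiDivAux (1-α) Q P
    have hαneg : α < 0 := div_neg_of_neg_of_pos hγneg hgb
    rw [renyiDiv, if_pos hαneg, renyiDivAux, if_neg (by simp [hQP])]
    rw [Measure.restrict_congr_set (Filter.eventuallyEq_univ.mpr hPd_pos), Measure.restrict_univ,
      hKval, ENNReal.log_ofReal_of_pos hKpos,
      show ((1 - α) * (1 - α - 1))⁻¹ = (α * (α - 1))⁻¹ by
        rw [show (1 - α) * (1 - α - 1) = α * (α - 1) by ring],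
      ← EReal.coe_mul, ← EReal.coe_mul, ← EReal.coe_add, EReal.coe_eq_coe_iff, hlogK]
    exact hfinal
  · -- γ > 0 : renyiDiv α P Q = renyiDivAux α P Q
    have hα0 : 0 < α := div_pos hγpos hgb
    rw [renyiDiv, if_neg (not_lt.2 hα0.le), renyiDivAux, if_neg (by simp [hPQ]),
      show Q + P = P + Q from add_comm Q P]
    rw [Measure.restrict_congr_set (Filter.eventuallyEq_univ.mpr hQd_pos), Measure.restrict_univ]
    have hswap : ∫⁻ x, P.rnDeriv (P + Q) x ^ α * Q.rnDeriv (P + Q) x ^ (1 - α) ∂(P + Q)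
        = ∫⁻ x, Q.rnDeriv (P + Q) x ^ (1 - α) * P.rnDeriv (P + Q) x ^ (1 - (1 - α)) ∂(P + Q) := by
      refine lintegral_congr fun x => ?_
      rw [mul_comm, show (1:ℝ) - (1 - α) = α by ring]
    rw [hswap, hKval, ENNReal.log_ofReal_of_pos hKpos,
      ← EReal.coe_mul, ← EReal.coe_mul, ← EReal.coe_add, EReal.coe_eq_coe_iff, hlogK]
    exact hfinal

lemma sup_attained (P : Measure Ω) [IsProbabilityMeasure P] {g : Ω → ℝ} (hg : Measurable g)
    {C : ℝ} (hC : ∀ x, |g x| ≤ C) {β γ : ℝ} (hβ : β ≠ 0) (hγ : γ ≠ 0) (hβγ : β < γ) :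
    ((γ⁻¹ * Real.log (∫ x, Real.exp (γ * g x) ∂P) : ℝ) : EReal) =
      ((β⁻¹ * Real.log (∫ x, Real.exp (β * g x) ∂(gibbs P g (γ - β))) : ℝ) : EReal)
        - (((γ - β)⁻¹ : ℝ) : EReal) * renyiDiv (γ / (γ - β)) (gibbs P g (γ - β)) P := by
  have hgb : 0 < γ - β := sub_pos.2 hβγ
  set α : ℝ := γ / (γ - β) with hα
  have hc : (γ - β)⁻¹ * (α * (α - 1))⁻¹ = (γ - β) / (γ * β) := by
    rw [← mul_inv, hα, eq_div_iff (mul_ne_zero hγ hβ), inv_mul_eq_div,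
      div_eq_iff (by
        have h1 : γ / (γ - β) * (γ / (γ - β) - 1) = γ * β / ((γ - β) * (γ - β)) := by
          field_simp; try ring
        rw [h1]
        exact mul_ne_zero hgb.ne' (div_ne_zero (mul_ne_zero hγ hβ)
          (mul_ne_zero hgb.ne' hgb.ne')))]
    field_simp
    try ring
  have he1 : (γ - β) / (γ * β) * α = β⁻¹ := by
    rw [hα]; field_simp; try ring
  have he5 : γ⁻¹ + (γ - β) / (γ * β) = β⁻¹ := by
    field_simp; try ring
  set Q := gibbs P g (γ - β) with hQ_def
  obtain ⟨hPd_pos, hQd_pos, hcore⟩ := gibbs_derivs (P := P) hg hC (γ - β)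
  haveI hQprob := gibbs_prob (P := P) hg hC (γ - β)
  have hQP : Q ≪ P := gibbs_ac (γ - β)
  have hPQ : P ≪ Q := ac_gibbs hg hC (γ - β)
  set W := ∫ y, Real.exp ((γ - β) * g y) ∂P with hW_def
  have hW : 0 < W := integral_exp_mul_pos P hg hC (γ - β)
  set B := ∫ x, Real.exp (γ * g x) ∂P with hB_def
  have hB : 0 < B := integral_exp_mul_pos P hg hC γ
  have hBQ : ∫ x, Real.exp (β * g x) ∂Q = W⁻¹ * B := by
    rw [hQ_def, integral_exp_gibbs hg hC (γ - β) β, show β + (γ - β) = γ by ring, ← hW_def,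
      ← hB_def]
  have hKval := hcore α
  rw [show (α * (γ - β)) = γ by rw [hα]; field_simp, ← hB_def] at hKval
  have hKpos : (0:ℝ) < (W ^ α)⁻¹ * B :=
    mul_pos (inv_pos.2 (Real.rpow_pos_of_pos hW _)) hB
  have hlogK : Real.log ((W ^ α)⁻¹ * B) = -(α * Real.log W) + Real.log B := by
    rw [Real.log_mul (inv_ne_zero (Real.rpow_pos_of_pos hW _).ne') hB.ne', Real.log_inv,
      Real.log_rpow hW]
  have hfinal : γ⁻¹ * Real.log B
      = β⁻¹ * Real.log (W⁻¹ * B)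
        - (γ - β)⁻¹ * ((α * (α - 1))⁻¹ * (-(α * Real.log W) + Real.log B)) := by
    rw [Real.log_mul (inv_ne_zero hW.ne') hB.ne', Real.log_inv, ← mul_assoc, hc]
    linear_combination (-(Real.log W)) * he1 + (Real.log B) * he5
  rw [hBQ]
  rcases lt_or_gt_of_ne hγ with hγneg | hγpos
  · -- γ < 0 : renyiDiv α Q P = renyiDivAux (1-α) P Q
    have hαneg : α < 0 := div_neg_of_neg_of_pos hγneg hgb
    rw [renyiDiv, if_pos hαneg, renyiDivAux, if_neg (by simp [hPQ]),
      show Q + P = P + Q from add_comm Q P]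
    rw [Measure.restrict_congr_set (Filter.eventuallyEq_univ.mpr hQd_pos), Measure.restrict_univ]
    have hswap : ∫⁻ x, P.rnDeriv (P + Q) x ^ (1 - α) * Q.rnDeriv (P + Q) x ^ (1 - (1 - α))
          ∂(P + Q)
        = ∫⁻ x, Q.rnDeriv (P + Q) x ^ α * P.rnDeriv (P + Q) x ^ (1 - α) ∂(P + Q) := by
      refine lintegral_congr fun x => ?_
      rw [mul_comm, show (1:ℝ) - (1 - α) = α by ring]
    rw [hswap, hKval, ENNReal.log_ofReal_of_pos hKpos,
      show ((1 - α) * (1 - α - 1))⁻¹ = (α * (α - 1))⁻¹ by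
        rw [show (1 - α) * (1 - α - 1) = α * (α - 1) by ring],
      ← EReal.coe_mul, ← EReal.coe_mul, ← EReal.coe_sub, EReal.coe_eq_coe_iff, hlogK]
    exact hfinal
  · -- γ > 0 : renyiDiv α Q P = renyiDivAux α Q P
    have hα0 : 0 < α := div_pos hγpos hgb
    rw [renyiDiv, if_neg (not_lt.2 hα0.le), renyiDivAux, if_neg (by simp [hQP])]
    rw [Measure.restrict_congr_set (Filter.eventuallyEq_univ.mpr hPd_pos), Measure.restrict_univ,
      hKval, ENNReal.log_ofReal_of_pos hKpos,
      ← EReal.coe_mul, ← EReal.coe_mul, ← EReal.coe_sub, EReal.coe_eq_coe_iff, hlogK]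
    exact hfinal

end Aux

/-- **Rényi–Gibbs variational principles (Proposition 5.3).** For a probability measure `P`,
bounded measurable `g`, and `β, γ ∈ ℝ \ {0}` with `β < γ`:
`β⁻¹ log ∫ e^{βg} dP = inf_Q { γ⁻¹ log ∫ e^{γg} dQ + (γ-β)⁻¹ R_{γ/(γ-β)}(P‖Q) }` and
`γ⁻¹ log ∫ e^{γg} dP = sup_Q { β⁻¹ log ∫ e^{βg} dQ - (γ-β)⁻¹ R_{γ/(γ-β)}(Q‖P) }`,
where `Q` ranges over all probability measures on `(Ω, M)`. -/
theorem renyi_gibbs_variational (P : Measure Ω) [IsProbabilityMeasure P]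
    (g : Ω → ℝ) (hg : Measurable g) (hb : ∃ C : ℝ, ∀ x, |g x| ≤ C)
    (β γ : ℝ) (hβ : β ≠ 0) (hγ : γ ≠ 0) (hβγ : β < γ) :
    (((β⁻¹ * Real.log (∫ x, Real.exp (β * g x) ∂P) : ℝ) : EReal) =
      ⨅ Q ∈ {Q : Measure Ω | IsProbabilityMeasure Q},
        ((γ⁻¹ * Real.log (∫ x, Real.exp (γ * g x) ∂Q) : ℝ) : EReal)
          + (((γ - β)⁻¹ : ℝ) : EReal) * renyiDiv (γ / (γ - β)) P Q) ∧
    (((γ⁻¹ * Real.log (∫ x, Real.exp (γ * g x) ∂P) : ℝ) : EReal) =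
      ⨆ Q ∈ {Q : Measure Ω | IsProbabilityMeasure Q},
        ((β⁻¹ * Real.log (∫ x, Real.exp (β * g x) ∂Q) : ℝ) : EReal)
          - (((γ - β)⁻¹ : ℝ) : EReal) * renyiDiv (γ / (γ - β)) Q P) := by
  obtain ⟨C, hC⟩ := hb
  constructor
  · -- infimum statement
    refine le_antisymm (le_iInf₂ fun Q hQ => ?_) ?_
    · haveI : IsProbabilityMeasure Q := hQ
      exact ineq_key P Q hg hC hβ hγ hβγ
    · refine iInf₂_le_of_le (gibbs P g (β - γ)) (gibbs_prob hg hC (β - γ)) ?_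
      exact le_of_eq (inf_attained P hg hC hβ hγ hβγ).symm
  · -- supremum statement
    refine le_antisymm ?_ (iSup₂_le fun Q hQ => ?_)
    · refine le_iSup₂_of_le (gibbs P g (γ - β)) (gibbs_prob hg hC (γ - β)) ?_
      exact le_of_eq (sup_attained P hg hC hβ hγ hβγ)
    · haveI : IsProbabilityMeasure Q := hQ
      have h := ineq_key Q P hg hC hβ hγ hβγ
      set R := (((γ - β)⁻¹ : ℝ) : EReal) * renyiDiv (γ / (γ - β)) Q P with hR
      rcases eq_or_ne R ⊤ with hRt | hRt
      · rw [hRt, sub_eq_add_neg, EReal.neg_top, EReal.add_bot]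
        exact bot_le
      rcases eq_or_ne R ⊥ with hRb | hRb
      · rw [hRb, EReal.add_bot] at h
        exact absurd (le_bot_iff.1 h) (EReal.coe_ne_bot _)
      · have hRr := EReal.coe_toReal hRt hRb
        rw [← hRr] at h ⊢
        have h2 : (β⁻¹ * Real.log (∫ x, Real.exp (β * g x) ∂Q))
            ≤ (γ⁻¹ * Real.log (∫ x, Real.exp (γ * g x) ∂P)) + R.toReal := by
          exact_mod_cast h
        rw [← EReal.coe_sub]
        exact EReal.coe_le_coe_iff.2 (by linarith)
end

section
/- Let P, Q be probability measures on a measurable space (Ω, M) and τ : Ω → [0,∞] be measurable. Then log ∫ τ dQ ≤ inf_{c>1} { c⁻¹ log ∫ τ^c dP + (c−1)⁻¹ R_{c/(c−1)}(Q‖P) }, where on the right-hand side the convention −∞ + ∞ ≡ ∞ is used. -/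
open MeasureTheory Real Set Filter
open scoped ENNReal Classical

variable {Ω : Type*} [MeasurableSpace Ω]

/-- **Risk-sensitive UQ upper bound (Lemma 5.5(1)).** For probability measures `P, Q` and
measurable `τ : Ω → [0,∞]`,
`log ∫ τ dQ ≤ inf_{c>1} { c⁻¹ log ∫ τ^c dP + (c-1)⁻¹ R_{c/(c-1)}(Q‖P) }`,
with the convention `-∞ + ∞ = ∞` on the right-hand side. -/
theorem risk_sensitive_uq_upper (P Q : Measure Ω)
    [IsProbabilityMeasure P] [IsProbabilityMeasure Q]
    (τ : Ω → ℝ≥0∞) (hτ : Measurable τ) :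
    ENNReal.log (∫⁻ x, τ x ∂Q) ≤
      ⨅ c ∈ Set.Ioi (1 : ℝ),
        EReal.addTop (((c⁻¹ : ℝ) : EReal) * ENNReal.log (∫⁻ x, τ x ^ c ∂P))
          ((((c - 1)⁻¹ : ℝ) : EReal) * renyiDiv (c / (c - 1)) Q P) := by
  refine le_iInf fun c => le_iInf fun hc => ?_
  simp only [Set.mem_Ioi] at hc
  have hc0 : (0:ℝ) < c := lt_trans one_pos hc
  have hc1 : (0:ℝ) < c - 1 := sub_pos.mpr hc
  set α : ℝ := c / (c - 1) with hα
  have hα1 : 1 < α := (one_lt_div hc1).mpr (by linarith)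
  have hα0 : 0 < α := lt_trans one_pos hα1
  by_cases hQP : Q ≪ P
  swap
  · have h1 : renyiDiv α Q P = ⊤ := by
      rw [renyiDiv, if_neg (not_lt.mpr hα0.le), renyiDivAux, if_pos ⟨hα1, hQP⟩]
    rw [h1, EReal.coe_mul_top_of_pos (by positivity), EReal.addTop, if_pos (Or.inr rfl)]
    exact le_top
  -- main case
  have haddTop : ∀ x y : EReal, x + y ≤ EReal.addTop x y := by
    intro x y
    rw [EReal.addTop]
    split
    · exact le_top
    · exact le_refl _
  refine le_trans ?_ (haddTop _ _)
  set ν : Measure Ω := P + Q with hν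
  set p : Ω → ℝ≥0∞ := P.rnDeriv ν with hp
  set q : Ω → ℝ≥0∞ := Q.rnDeriv ν with hq
  have hp_meas : Measurable p := Measure.measurable_rnDeriv P ν
  have hq_meas : Measurable q := Measure.measurable_rnDeriv Q ν
  have hPν : P ≪ ν := (Measure.le_add_right le_rfl).absolutelyContinuous
  have hQν : Q ≪ ν := (Measure.le_add_left le_rfl).absolutelyContinuous
  set S : Set Ω := {x | 0 < p x} with hS
  have hSm : MeasurableSet S := measurableSet_lt measurable_const hp_meas
  have hPS : P Sᶜ = 0 := by
    have h1 : ∫⁻ x in Sᶜ, p x ∂ν = P Sᶜ := Measure.setLIntegral_rnDeriv hPν Sᶜ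
    rw [← h1, setLIntegral_congr_fun hSm.compl
      (fun x hx => ?_), lintegral_zero]
    simp only [hS, Set.mem_compl_iff, Set.mem_setOf_eq, not_lt, le_zero_iff] at hx
    exact hx
  have hQS : Q Sᶜ = 0 := hQP hPS
  have hνS : ν Sᶜ = 0 := by
    rw [hν, Measure.add_apply, hPS, hQS, add_zero]
  have hrestrict : ν.restrict S = ν :=
    Measure.restrict_eq_self_of_ae_mem (ae_iff.mpr hνS)
  have hp_lt_top : ∀ᵐ x ∂ν, p x < ⊤ := Measure.rnDeriv_lt_top P ν
  have hp_pos : ∀ᵐ x ∂ν, 0 < p x := ae_iff.mpr hνS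
  set f : Ω → ℝ≥0∞ := fun x => τ x * p x ^ (c⁻¹ : ℝ) with hf
  set g : Ω → ℝ≥0∞ := fun x => q x * p x ^ (-(c⁻¹) : ℝ) with hg
  have hf_meas : Measurable f := hτ.mul (hp_meas.pow_const _)
  have hg_meas : Measurable g := hq_meas.mul (hp_meas.pow_const _)
  have hconj : Real.HolderConjugate c α := by
    exact (Real.holderConjugate_iff_eq_conjExponent hc).mpr hα
  -- pointwise identity a.e.
  have step2 : ∀ᵐ x ∂ν, q x * τ x = f x * g x := by
    filter_upwards [hp_lt_top, hp_pos] with x hxt hxp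
    have : p x ^ (c⁻¹ : ℝ) * p x ^ (-(c⁻¹) : ℝ) = 1 := by
      rw [← ENNReal.rpow_add _ _ hxp.ne' hxt.ne]
      simp
    calc q x * τ x = τ x * q x * (p x ^ (c⁻¹ : ℝ) * p x ^ (-(c⁻¹) : ℝ)) := by
          rw [this, mul_one, mul_comm]
      _ = f x * g x := by rw [hf, hg]; ring
  have factorf : ∫⁻ x, f x ^ c ∂ν = ∫⁻ x, τ x ^ c ∂P := by
    have hpt : ∀ x, f x ^ c = p x * τ x ^ c := by
      intro x
      rw [hf, ENNReal.mul_rpow_of_nonneg _ _ hc0.le, ← ENNReal.rpow_mul,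
        inv_mul_cancel₀ hc0.ne', ENNReal.rpow_one, mul_comm]
    rw [lintegral_congr hpt, lintegral_rnDeriv_mul hPν
      ((hτ.pow_const _).aemeasurable)]
  have factorg : ∫⁻ x, g x ^ α ∂ν
      = ∫⁻ x in S, q x ^ α * p x ^ (1 - α) ∂ν := by
    have hexp : (-(c⁻¹) : ℝ) * α = 1 - α := by
      rw [hα]; field_simp; ring
    have hpt : ∀ x, g x ^ α = q x ^ α * p x ^ (1 - α) := by
      intro x
      rw [hg, ENNReal.mul_rpow_of_nonneg _ _ hα0.le, ← ENNReal.rpow_mul, hexp]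
    rw [lintegral_congr hpt, hrestrict]
  have key : ∫⁻ x, τ x ∂Q ≤ (∫⁻ x, τ x ^ c ∂P) ^ (1/c) *
      (∫⁻ x in S, q x ^ α * p x ^ (1 - α) ∂ν) ^ (1/α) := by
    calc ∫⁻ x, τ x ∂Q = ∫⁻ x, q x * τ x ∂ν :=
          (lintegral_rnDeriv_mul hQν hτ.aemeasurable).symm
      _ = ∫⁻ x, (f * g) x ∂ν := lintegral_congr_ae step2
      _ ≤ (∫⁻ x, f x ^ c ∂ν) ^ (1/c) * (∫⁻ x, g x ^ α ∂ν) ^ (1/α) :=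
          ENNReal.lintegral_mul_le_Lp_mul_Lq ν hconj hf_meas.aemeasurable
            hg_meas.aemeasurable
      _ = _ := by rw [factorf, factorg]
  have hlog := ENNReal.log_monotone key
  rw [ENNReal.log_mul_add, ENNReal.log_rpow, ENNReal.log_rpow] at hlog
  have hR : (((c - 1)⁻¹ : ℝ) : EReal) * renyiDiv (c / (c - 1)) Q P
      = ((1/α : ℝ) : EReal) *
        ENNReal.log (∫⁻ x in S, q x ^ α * p x ^ (1 - α) ∂ν) := by
    rw [renyiDiv, if_neg (not_lt.mpr hα0.le), renyiDivAux, if_neg (by tauto),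
      ← mul_assoc, ← EReal.coe_mul]
    congr 2
    rw [hα]
    field_simp
    ring
  rw [hR]
  convert hlog using 3
  norm_num
end

section
/- Let P, Q be probability measures on a measurable space (Ω, M) and τ : Ω → [0,∞] be measurable. Then log ∫ τ dQ ≥ sup_{c<1, c≠0} { c⁻¹ log ∫ τ^c dP − (1−c)⁻¹ R_{1/(1−c)}(P‖Q) }, where on the right-hand side the convention ∞ − ∞ ≡ −∞ is used. -/
open MeasureTheory Real Set Filter
open scoped ENNReal Classical

variable {Ω : Type*} [MeasurableSpace Ω]

section AuxLemmas

variable {α : Type*} [MeasurableSpace α]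


variable {α : Type*} [MeasurableSpace α]


variable {α : Type*} [MeasurableSpace α]

/-- Hölder's inequality in the symmetric form with exponent `θ ∈ (0,1)`. -/
lemma holder_theta (μ : Measure α) {θ : ℝ} (h0 : 0 < θ) (h1 : θ < 1)
    {f g : α → ℝ≥0∞} (hf : AEMeasurable f μ) (hg : AEMeasurable g μ) :
    ∫⁻ x, f x ^ θ * g x ^ (1 - θ) ∂μ ≤
      (∫⁻ x, f x ∂μ) ^ θ * (∫⁻ x, g x ∂μ) ^ (1 - θ) := by
  have h1θ : 0 < 1 - θ := by linarith
  have hpq : (1/θ).HolderConjugate (1/(1-θ)) := by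
    constructor
    · rw [one_div, inv_inv, one_div, inv_inv, inv_one]; ring
    · positivity
    · positivity
  have H := ENNReal.lintegral_mul_le_Lp_mul_Lq μ hpq (hf.pow_const θ) (hg.pow_const (1-θ))
  simp only [Pi.mul_apply] at H
  refine H.trans_eq ?_
  rw [one_div_one_div, one_div_one_div]
  congr 1
  · congr 1
    refine lintegral_congr fun x => ?_
    rw [← ENNReal.rpow_mul, mul_one_div_cancel h0.ne', ENNReal.rpow_one]
  · congr 1
    refine lintegral_congr fun x => ?_
    rw [← ENNReal.rpow_mul, mul_one_div_cancel h1θ.ne', ENNReal.rpow_one]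

lemma ereal_aux_pos {c : ℝ} (h0 : 0 < c) (h1 : c < 1) {x y z : EReal}
    (h : x ≤ (c : EReal) * y + ((1 - c : ℝ) : EReal) * z) :
    ((c⁻¹ : ℝ) : EReal) * x - (((1 - c)/c : ℝ) : EReal) * z ≤ y := by
  have hci : (0:ℝ) < c⁻¹ := by positivity
  have hb : (0:ℝ) < (1 - c)/c := div_pos (by linarith) h0
  induction y with
  | top => exact le_top
  | bot =>
    rw [EReal.coe_mul_bot_of_pos (by exact_mod_cast h0), EReal.bot_add, le_bot_iff] at h
    rw [h, EReal.coe_mul_bot_of_pos hci, EReal.bot_sub]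
  | coe y =>
    induction x with
    | bot => rw [EReal.coe_mul_bot_of_pos hci, EReal.bot_sub]; exact bot_le
    | top =>
      have hz : z = ⊤ := by
        by_contra hz
        induction z with
        | top => exact hz rfl
        | bot => rw [EReal.coe_mul_bot_of_pos (by exact_mod_cast (by linarith : (0:ℝ) < 1 - c)),
            EReal.add_bot, le_bot_iff] at h; simp at h
        | coe z =>
          rw [← EReal.coe_mul, ← EReal.coe_mul, ← EReal.coe_add, top_le_iff] at h
          exact (EReal.coe_ne_top _) h
      rw [hz, EReal.coe_mul_top_of_pos hci, EReal.coe_mul_top_of_pos hb, EReal.sub_top]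
      exact bot_le
    | coe x =>
      induction z with
      | top => rw [EReal.coe_mul_top_of_pos hb, EReal.sub_top]; exact bot_le
      | bot =>
        rw [EReal.coe_mul_bot_of_pos (by exact_mod_cast (by linarith : (0:ℝ) < 1 - c)),
          EReal.add_bot, le_bot_iff] at h
        exact absurd h (EReal.coe_ne_bot _)
      | coe z =>
        rw [← EReal.coe_mul, ← EReal.coe_mul, ← EReal.coe_add, EReal.coe_le_coe_iff] at h
        rw [← EReal.coe_mul, ← EReal.coe_mul, ← EReal.coe_sub, EReal.coe_le_coe_iff]
        have h2 : x - (1-c)*z ≤ y*c := by linarith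
        have h3 : (x - (1-c)*z)/c ≤ y := (div_le_iff₀ h0).2 h2
        calc c⁻¹ * x - (1-c)/c * z = (x - (1-c)*z)/c := by ring
        _ ≤ y := h3

lemma ereal_aux_neg {c a : ℝ} (hc : c < 0) (ha : a * (1 - c) = 1) {x y z : EReal}
    (h : z ≤ (a : EReal) * x + ((1 - a : ℝ) : EReal) * y) :
    ((c⁻¹ : ℝ) : EReal) * x - (((1 - c)/c : ℝ) : EReal) * z ≤ y := by
  have h1c : (0:ℝ) < 1 - c := by linarith
  have hav : a = (1-c)⁻¹ := by field_simp at ha ⊢; linarith [ha]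
  have ha0 : 0 < a := by rw [hav]; positivity
  have ha1 : a < 1 := by
    rw [hav]; rw [inv_lt_one_iff₀]; right; linarith
  have hci : c⁻¹ < 0 := inv_neg''.2 hc
  have hb : (1 - c)/c < 0 := div_neg_of_pos_of_neg h1c hc
  induction y with
  | top => exact le_top
  | bot =>
    induction x with
    | top =>
      rw [EReal.coe_mul_top_of_neg hci, EReal.bot_sub]
    | bot =>
      have hz : z = ⊥ := by
        rwa [EReal.coe_mul_bot_of_pos (by exact_mod_cast ha0), EReal.bot_add, le_bot_iff] at h
      rw [hz, EReal.coe_mul_bot_of_neg hci, EReal.coe_mul_bot_of_neg hb, EReal.sub_top]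
    | coe x =>
      rw [EReal.coe_mul_bot_of_pos (by exact_mod_cast (by linarith : (0:ℝ) < 1 - a)),
        EReal.add_bot, le_bot_iff] at h
      rw [h, EReal.coe_mul_bot_of_neg hb, EReal.sub_top]
  | coe y =>
    induction x with
    | top =>
      rw [EReal.coe_mul_top_of_neg hci, EReal.bot_sub]; exact bot_le
    | bot =>
      rw [EReal.coe_mul_bot_of_pos (by exact_mod_cast ha0), EReal.bot_add, le_bot_iff] at h
      rw [h, EReal.coe_mul_bot_of_neg hci, EReal.coe_mul_bot_of_neg hb, EReal.sub_top]
      exact bot_le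
    | coe x =>
      induction z with
      | bot => rw [EReal.coe_mul_bot_of_neg hb, EReal.sub_top]; exact bot_le
      | top =>
        rw [← EReal.coe_mul, ← EReal.coe_mul, ← EReal.coe_add, top_le_iff] at h
        exact absurd h (EReal.coe_ne_top _)
      | coe z =>
        rw [← EReal.coe_mul, ← EReal.coe_mul, ← EReal.coe_add, EReal.coe_le_coe_iff] at h
        rw [← EReal.coe_mul, ← EReal.coe_mul, ← EReal.coe_sub, EReal.coe_le_coe_iff]
        -- from h : z ≤ a*x + (1-a)*y with a = (1-c)⁻¹, derive x ≥ c*y + (1-c)*z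
        have h2 : (1-c)*z ≤ x - c*y := by
          have := mul_le_mul_of_nonneg_left h (le_of_lt h1c)
          have e : (1-c)*(a*x + (1-a)*y) = x - c*y := by
            rw [hav]; field_simp; ring
          linarith [e ▸ this]
        have h4 : x - (1-c)*z - c*y ≥ 0 := by linarith
        have h5 : (x - (1-c)*z - c*y)/c ≤ 0 := div_nonpos_of_nonneg_of_nonpos h4 hc.le
        have e2 : c⁻¹*x - (1-c)/c*z - y = (x - (1-c)*z - c*y)/c := by
          field_simp [hc.ne]
        linarith [e2 ▸ h5]

end AuxLemmas

/-- **Risk-sensitive UQ lower bound (Lemma 5.5(2)).** For probability measures `P, Q` and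
measurable `τ : Ω → [0,∞]`,
`log ∫ τ dQ ≥ sup_{c<1, c≠0} { c⁻¹ log ∫ τ^c dP - (1-c)⁻¹ R_{1/(1-c)}(P‖Q) }`,
with the convention `∞ - ∞ = -∞` (the default on `EReal`). -/
theorem risk_sensitive_uq_lower (P Q : Measure Ω)
    [IsProbabilityMeasure P] [IsProbabilityMeasure Q]
    (τ : Ω → ℝ≥0∞) (hτ : Measurable τ) :
    (⨆ c ∈ {c : ℝ | c < 1 ∧ c ≠ 0},
        ((c⁻¹ : ℝ) : EReal) * ENNReal.log (∫⁻ x, τ x ^ c ∂P)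
          - (((1 - c)⁻¹ : ℝ) : EReal) * renyiDiv (1 / (1 - c)) P Q) ≤
      ENNReal.log (∫⁻ x, τ x ∂Q) := by
  refine iSup₂_le fun c hc => ?_
  simp only [Set.mem_setOf_eq] at hc
  obtain ⟨hc1, hc0⟩ := hc
  have h1c : (0:ℝ) < 1 - c := by linarith
  have hα0 : (0:ℝ) < 1/(1-c) := by positivity
  simp only [renyiDiv, if_neg (not_lt.2 hα0.le)]
  by_cases hB : (∫⁻ x, τ x ∂Q) = ⊤
  · rw [hB, ENNReal.log_top]; exact le_top
  set ν : Measure Ω := Q + P with hν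
  have hPν : P ≪ ν := Measure.absolutelyContinuous_of_le (Measure.le_add_left le_rfl)
  have hQν : Q ≪ ν := Measure.absolutelyContinuous_of_le (Measure.le_add_right le_rfl)
  set p : Ω → ℝ≥0∞ := P.rnDeriv ν with hpdef
  set q : Ω → ℝ≥0∞ := Q.rnDeriv ν with hqdef
  have hpm : Measurable p := Measure.measurable_rnDeriv P ν
  have hqm : Measurable q := Measure.measurable_rnDeriv Q ν
  set S : Set Ω := {x | 0 < q x} with hSdef
  have hSm : MeasurableSet S := measurableSet_lt measurable_const hqm
  have hql : ∀ᵐ x ∂ν, q x < ⊤ := Measure.rnDeriv_lt_top Q ν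
  set I : ℝ≥0∞ := ∫⁻ x in S, p x ^ (1/(1-c)) * q x ^ (1 - 1/(1-c)) ∂ν with hIdef
  set A : ℝ≥0∞ := ∫⁻ x, τ x ^ c ∂P with hAdef
  set B : ℝ≥0∞ := ∫⁻ x, τ x ∂Q with hBdef
  have hco : ((1 - c)⁻¹ : ℝ) * ((1/(1-c)) * ((1/(1-c)) - 1))⁻¹ = (1-c)/c := by
    field_simp
    rw [sub_sub_cancel, div_self hc0]
  rcases lt_or_gt_of_ne hc0 with hcneg | hcpos
  · -- case c < 0
    have hα1 : 1/(1-c) < 1 := by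
      rw [div_lt_one h1c]; linarith
    have h1α : (0:ℝ) < 1 - 1/(1-c) := by linarith
    rw [renyiDivAux, if_neg (fun h => absurd h.1 (not_lt.2 hα1.le))]
    by_cases hA : A = ⊤
    · rw [hA, ENNReal.log_top, EReal.coe_mul_top_of_neg (by exact inv_neg''.2 hcneg),
        EReal.bot_sub]
      exact bot_le
    · have hp0 : ∀ᵐ x ∂ν, τ x = 0 → p x = 0 := by
        have h2 : ∀ᵐ x ∂P, τ x ≠ 0 := by
          filter_upwards [ae_lt_top (hτ.pow_const c) hA] with x hx h0
          rw [h0, ENNReal.zero_rpow_of_neg hcneg] at hx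
          exact (lt_irrefl _ hx)
        have hPτ : P {x | τ x = 0} = 0 := by
          have := ae_iff.1 h2
          simpa [not_not] using this
        have hT : MeasurableSet {x | τ x = 0} := hτ (measurableSet_singleton 0)
        have h3 : ∫⁻ x in {x | τ x = 0}, p x ∂ν = 0 := by
          rw [Measure.setLIntegral_rnDeriv' hPν hT, hPτ]
        have h4 := (lintegral_eq_zero_iff hpm).1 h3
        rw [EventuallyEq, ae_restrict_iff' hT] at h4
        filter_upwards [h4] with x hx h0
        exact hx h0
      have hqt : ∀ᵐ x ∂ν, τ x = ⊤ → q x = 0 := by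
        have h2 : ∀ᵐ x ∂Q, τ x ≠ ⊤ := by
          filter_upwards [ae_lt_top hτ hB] with x hx
          exact hx.ne
        have hQτ : Q {x | τ x = ⊤} = 0 := by
          have := ae_iff.1 h2
          simpa [not_not] using this
        have hT : MeasurableSet {x | τ x = ⊤} := hτ (measurableSet_singleton ⊤)
        have h3 : ∫⁻ x in {x | τ x = ⊤}, q x ∂ν = 0 := by
          rw [Measure.setLIntegral_rnDeriv' hQν hT, hQτ]
        have h4 := (lintegral_eq_zero_iff hqm).1 h3
        rw [EventuallyEq, ae_restrict_iff' hT] at h4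
        filter_upwards [h4] with x hx h0
        exact hx h0
      have hptw : ∀ᵐ x ∂(ν.restrict S),
          p x ^ (1/(1-c)) * q x ^ (1 - 1/(1-c))
            = (τ x ^ c * p x) ^ (1/(1-c)) * (τ x * q x) ^ (1 - 1/(1-c)) := by
        filter_upwards [ae_restrict_mem hSm, ae_restrict_of_ae hql, ae_restrict_of_ae hp0,
          ae_restrict_of_ae hqt] with x hx hxl hx0 hxt
        by_cases h0 : τ x = 0
        · rw [h0, hx0 h0, ENNReal.zero_rpow_of_neg hcneg, mul_zero, zero_mul,
            ENNReal.zero_rpow_of_pos hα0]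
          simp [ENNReal.zero_rpow_of_pos h1α]
        · have ht : τ x ≠ ⊤ := fun h => (ne_of_gt hx) (hxt h)
          rw [ENNReal.mul_rpow_of_nonneg _ _ hα0.le, ENNReal.mul_rpow_of_nonneg _ _ h1α.le,
            ← ENNReal.rpow_mul]
          have he : c * (1/(1-c)) + (1 - 1/(1-c)) = 0 := by field_simp; ring
          calc p x ^ (1/(1-c)) * q x ^ (1 - 1/(1-c))
              = (τ x ^ (c * (1/(1-c))) * τ x ^ (1 - 1/(1-c))) *
                (p x ^ (1/(1-c)) * q x ^ (1 - 1/(1-c))) := by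
                rw [← ENNReal.rpow_add _ _ h0 ht, he, ENNReal.rpow_zero, one_mul]
            _ = τ x ^ (c * (1/(1-c))) * p x ^ (1/(1-c)) *
                (τ x ^ (1 - 1/(1-c)) * q x ^ (1 - 1/(1-c))) := by ring
      have hIle : I ≤ A ^ (1/(1-c)) * B ^ (1 - 1/(1-c)) := by
        rw [hIdef]
        calc ∫⁻ x in S, p x ^ (1/(1-c)) * q x ^ (1 - 1/(1-c)) ∂ν
            = ∫⁻ x in S, (τ x ^ c * p x) ^ (1/(1-c)) * (τ x * q x) ^ (1 - 1/(1-c)) ∂ν :=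
              lintegral_congr_ae hptw
          _ ≤ (∫⁻ x in S, τ x ^ c * p x ∂ν) ^ (1/(1-c)) *
              (∫⁻ x in S, τ x * q x ∂ν) ^ (1 - 1/(1-c)) :=
              holder_theta _ hα0 hα1 ((hτ.pow_const c).mul hpm).aemeasurable
                (hτ.mul hqm).aemeasurable
          _ ≤ A ^ (1/(1-c)) * B ^ (1 - 1/(1-c)) := by
              refine mul_le_mul' (ENNReal.rpow_le_rpow ?_ hα0.le)
                (ENNReal.rpow_le_rpow ?_ h1α.le)
              · refine le_trans (setLIntegral_le_lintegral _ _) (le_of_eq ?_)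
                rw [hAdef, ← lintegral_rnDeriv_mul hPν (hτ.pow_const c).aemeasurable]
                exact lintegral_congr fun x => mul_comm _ _
              · refine le_trans (setLIntegral_le_lintegral _ _) (le_of_eq ?_)
                rw [hBdef, ← lintegral_rnDeriv_mul hQν hτ.aemeasurable]
                exact lintegral_congr fun x => mul_comm _ _
      have hlog : ENNReal.log I ≤ ((1/(1-c) : ℝ) : EReal) * ENNReal.log A
          + ((1 - 1/(1-c) : ℝ) : EReal) * ENNReal.log B := by
        refine le_trans (ENNReal.log_monotone hIle) ?_
        rw [ENNReal.log_mul_add, ENNReal.log_rpow, ENNReal.log_rpow]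
      rw [← mul_assoc, ← EReal.coe_mul, hco]
      exact ereal_aux_neg hcneg (by field_simp) hlog
  · -- case 0 < c
    have hα1 : 1 < 1/(1-c) := by
      rw [lt_div_iff₀ h1c]; linarith
    by_cases hPQ : P ≪ Q
    · rw [renyiDivAux, if_neg (fun h => h.2 hPQ)]
      have hPS : P Sᶜ = 0 := by
        refine hPQ ?_
        have h := Measure.rnDeriv_pos hQν
        have := ae_iff.1 h
        simpa [hSdef, compl_setOf, not_lt, le_zero_iff] using this
      have hA1 : A = ∫⁻ x in S, p x * τ x ^ c ∂ν := by
        rw [hAdef, ← lintegral_add_compl (fun x => τ x ^ c) hSm,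
          setLIntegral_measure_zero _ _ hPS, add_zero,
          setLIntegral_rnDeriv_mul hPν (hτ.pow_const c).aemeasurable hSm]
      have hptw : ∀ᵐ x ∂(ν.restrict S),
          p x * τ x ^ c
            = (τ x * q x) ^ c * (p x ^ (1/(1-c)) * q x ^ (1 - 1/(1-c))) ^ (1-c) := by
        filter_upwards [ae_restrict_mem hSm, ae_restrict_of_ae hql] with x hx hxl
        have hq0 : q x ≠ 0 := ne_of_gt hx
        have hqtop : q x ≠ ⊤ := hxl.ne
        rw [ENNReal.mul_rpow_of_nonneg _ _ hcpos.le, ENNReal.mul_rpow_of_nonneg _ _ h1c.le,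
          ← ENNReal.rpow_mul, ← ENNReal.rpow_mul]
        have e1 : (1/(1-c)) * (1-c) = 1 := by field_simp
        have e2 : (1 - 1/(1-c)) * (1-c) = -c := by field_simp; ring
        rw [e1, e2, ENNReal.rpow_one]
        calc p x * τ x ^ c
            = (q x ^ c * q x ^ (-c)) * (p x * τ x ^ c) := by
              rw [← ENNReal.rpow_add _ _ hq0 hqtop, add_neg_cancel, ENNReal.rpow_zero, one_mul]
          _ = τ x ^ c * q x ^ c * (p x * q x ^ (-c)) := by ring
      have hkey : A ≤ B ^ c * I ^ (1-c) := by
        rw [hA1]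
        calc ∫⁻ x in S, p x * τ x ^ c ∂ν
            = ∫⁻ x in S, (τ x * q x) ^ c * (p x ^ (1/(1-c)) * q x ^ (1 - 1/(1-c))) ^ (1-c) ∂ν :=
              lintegral_congr_ae hptw
          _ ≤ (∫⁻ x in S, τ x * q x ∂ν) ^ c *
              (∫⁻ x in S, p x ^ (1/(1-c)) * q x ^ (1 - 1/(1-c)) ∂ν) ^ (1-c) :=
              holder_theta _ hcpos hc1 (hτ.mul hqm).aemeasurable
                ((hpm.pow_const _).mul (hqm.pow_const _)).aemeasurable
          _ ≤ B ^ c * I ^ (1-c) := by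
              refine mul_le_mul' (ENNReal.rpow_le_rpow ?_ hcpos.le) le_rfl
              refine le_trans (setLIntegral_le_lintegral _ _) (le_of_eq ?_)
              rw [hBdef, ← lintegral_rnDeriv_mul hQν hτ.aemeasurable]
              exact lintegral_congr fun x => mul_comm _ _
      have hlog : ENNReal.log A ≤ (c : EReal) * ENNReal.log B
          + ((1 - c : ℝ) : EReal) * ENNReal.log I := by
        refine le_trans (ENNReal.log_monotone hkey) ?_
        rw [ENNReal.log_mul_add, ENNReal.log_rpow, ENNReal.log_rpow]
      rw [← mul_assoc, ← EReal.coe_mul, hco]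
      exact ereal_aux_pos hcpos hc1 hlog
    · rw [renyiDivAux, if_pos ⟨hα1, hPQ⟩,
        EReal.coe_mul_top_of_pos (by positivity), EReal.sub_top]
      exact bot_le
end

section
/- Let P be a probability measure on a measurable space (Ω, M), τ : Ω → [0,∞] be measurable, and suppose Q ∈ U^Λ(P) for some Λ : [0,∞) → [0,∞] with Λ(0) = 0 and Λ finite on a neighborhood of 0. Then log ∫ τ dQ ≤ inf_{c>1} { c⁻¹ log ∫ τ^c dP + ((c−1)/c) Λ(1/(c−1)) }, where the convention −∞ + ∞ ≡ ∞ is used. -/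
open MeasureTheory Real Set Filter
open scoped ENNReal Classical

variable {Ω : Type*} [MeasurableSpace Ω]

/-- **Main UQ bound over an ambiguity set (Theorem 5.7).** If `Q ∈ U^Λ(P)` for some
`Λ : [0,∞) → [0,∞]` with `Λ(0) = 0` and `Λ` finite on a neighborhood of `0`, then
`log ∫ τ dQ ≤ inf_{c>1} { c⁻¹ log ∫ τ^c dP + ((c-1)/c) Λ(1/(c-1)) }`,
with the convention `-∞ + ∞ = ∞`. -/
theorem main_uq_bound (P : Measure Ω) [IsProbabilityMeasure P]
    (τ : Ω → ℝ≥0∞) (hτ : Measurable τ)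
    (L : ℝ → EReal) (hL0 : L 0 = 0) (hLnn : ∀ l : ℝ, 0 ≤ l → 0 ≤ L l)
    (hLfin : ∃ ε > (0 : ℝ), ∀ l : ℝ, 0 ≤ l → l < ε → L l ≠ ⊤)
    (Q : Measure Ω) (hQ : Q ∈ ambiguitySet L P) :
    ENNReal.log (∫⁻ x, τ x ∂Q) ≤
      ⨅ c ∈ Set.Ioi (1 : ℝ),
        EReal.addTop (((c⁻¹ : ℝ) : EReal) * ENNReal.log (∫⁻ x, τ x ^ c ∂P))
          ((((c - 1) / c : ℝ) : EReal) * L (1 / (c - 1))) := by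
  obtain ⟨hQprob, hQac, hQcgf⟩ := hQ
  refine le_iInf₂ fun c hc => ?_
  have hc1 : (1 : ℝ) < c := hc
  have hc0 : (0 : ℝ) < c := lt_trans one_pos hc1
  have hcm1 : (0 : ℝ) < c - 1 := by linarith
  have hcm1' : c - 1 ≠ 0 := ne_of_gt hcm1
  by_cases htop : (((c⁻¹ : ℝ) : EReal) * ENNReal.log (∫⁻ x, τ x ^ c ∂P)) = ⊤ ∨
      ((((c - 1) / c : ℝ) : EReal) * L (1 / (c - 1))) = ⊤
  · rw [EReal.addTop, if_pos htop]; exact le_top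
  rw [EReal.addTop, if_neg htop]
  set q : ℝ := c / (c - 1) with hq
  have hpq : c.HolderConjugate q := Real.HolderConjugate.conjExponent hc1
  have hR : Measurable (Q.rnDeriv P) := Measure.measurable_rnDeriv Q P
  have hq_eq : q = 1 / (c - 1) + 1 := by rw [hq]; field_simp; ring
  have h2 : ∫⁻ x, Q.rnDeriv P x ^ q ∂P = ∫⁻ x, Q.rnDeriv P x ^ (1 / (c - 1)) ∂Q := by
    rw [← MeasureTheory.lintegral_rnDeriv_mul hQac
      ((hR.pow_const (1 / (c - 1))).aemeasurable)]
    refine lintegral_congr fun x => ?_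
    rw [hq_eq, ENNReal.rpow_add_of_nonneg _ _ (by positivity) zero_le_one,
      ENNReal.rpow_one, mul_comm]
  have hHolder : ∫⁻ x, τ x ∂Q ≤
      (∫⁻ x, τ x ^ c ∂P) ^ (1 / c) * (∫⁻ x, Q.rnDeriv P x ^ q ∂P) ^ (1 / q) := by
    rw [← MeasureTheory.lintegral_rnDeriv_mul hQac hτ.aemeasurable]
    have := ENNReal.lintegral_mul_le_Lp_mul_Lq P hpq hτ.aemeasurable hR.aemeasurable
    simpa [Pi.mul_apply, mul_comm] using this
  have hcgf := hQcgf (1 / (c - 1)) (by positivity)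
  calc ENNReal.log (∫⁻ x, τ x ∂Q)
      ≤ ENNReal.log ((∫⁻ x, τ x ^ c ∂P) ^ (1 / c) *
          (∫⁻ x, Q.rnDeriv P x ^ q ∂P) ^ (1 / q)) := ENNReal.log_monotone hHolder
    _ = ((1 / c : ℝ) : EReal) * ENNReal.log (∫⁻ x, τ x ^ c ∂P)
        + ((1 / q : ℝ) : EReal) * ENNReal.log (∫⁻ x, Q.rnDeriv P x ^ (1 / (c - 1)) ∂Q) := by
        rw [ENNReal.log_mul_add, ENNReal.log_rpow, ENNReal.log_rpow, h2]
    _ ≤ _ := by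
        refine add_le_add (le_of_eq (by rw [one_div])) ?_
        have h1q : 1 / q = (c - 1) / c := one_div_div _ _
        rw [h1q]
        exact mul_le_mul_of_nonneg_left hcgf
          (by exact_mod_cast EReal.coe_nonneg.2 (by positivity))
end

section
/- Let Λ : [0,∞) → [0,∞] satisfy Λ(0) = 0, be finite on a neighborhood of 0, and be differentiable from the right at 0 with right derivative η. Then for any probability measure P, U^Λ(P) ⊂ { Q : R(Q‖P) ≤ η }, i.e., every Q ∈ U^Λ(P) satisfies R(Q‖P) ≤ η. -/
open MeasureTheory Real Set Filter
open scoped ENNReal Classical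

variable {Ω : Type*} [MeasurableSpace Ω]

/-- **Relative-entropy bound on the ambiguity set (Lemma 2.3).** If `Λ(0) = 0`, `Λ` is finite
on a neighborhood of `0` and differentiable from the right at `0` with right derivative `η`,
then every `Q ∈ U^Λ(P)` satisfies `R(Q‖P) ≤ η`. -/
theorem ambiguitySet_relEnt_bound (L : ℝ → EReal) (hL0 : L 0 = 0)
    (hLnn : ∀ l : ℝ, 0 ≤ l → 0 ≤ L l)
    (hLfin : ∃ ε > (0 : ℝ), ∀ l : ℝ, 0 ≤ l → l < ε → L l ≠ ⊤)
    (η : ℝ) (hderiv : HasDerivWithinAt (fun l : ℝ => (L l).toReal) η (Set.Ici 0) 0)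
    (P : Measure Ω) [IsProbabilityMeasure P] :
    ∀ Q ∈ ambiguitySet L P, relEnt Q P ≤ (η : EReal) := by
  have hη0 : 0 ≤ η := by
    have h := hderiv
    rw [hasDerivWithinAt_iff_tendsto_slope] at h
    rw [Set.Ici_sdiff_left] at h
    refine ge_of_tendsto h ?_
    filter_upwards [self_mem_nhdsWithin] with l hl
    have hl' : (0 : ℝ) < l := hl
    have h1 : (0:ℝ) ≤ (L l).toReal := by
      rcases eq_or_ne (L l) ⊤ with h|h
      · simp [h]
      · simpa using EReal.toReal_le_toReal (hLnn l hl'.le) (by simp) h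
    have h0 : (L 0).toReal = 0 := by rw [hL0]; rfl
    rw [slope_def_field]
    simp only [h0, sub_zero]
    exact div_nonneg h1 hl'.le
  rintro Q ⟨hQprob, hQP, hcgf⟩
  obtain ⟨ε, hε, hLfin⟩ := hLfin
  rw [relEnt, if_pos hQP]
  rw [EReal.coe_le_coe_iff]
  set f : Ω → ℝ := fun x => Real.log (Q.rnDeriv P x).toReal with hf
  by_cases hint : Integrable f Q
  · -- main case
    -- key inequality for each l in (0, ε)
    have key : ∀ l : ℝ, 0 < l → l < ε →
        ∫ x, f x ∂Q ≤ (Real.exp ((L l).toReal) - 1) / l := by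
      intro l hl hlε
      have hfin : L l ≠ ⊤ := hLfin l hl.le hlε
      have hLl_nn : 0 ≤ L l := hLnn l hl.le
      have hcg := hcgf l hl
      rw [cgfLLR] at hcg
      set I := ∫⁻ x, (Q.rnDeriv P x) ^ l ∂Q with hI
      have hItop : I ≠ ⊤ := by
        intro h
        rw [h, ENNReal.log_top, top_le_iff] at hcg
        exact hfin hcg
      have hpos : ∀ᵐ x ∂Q, 0 < Q.rnDeriv P x := Measure.rnDeriv_pos hQP
      have hlt : ∀ᵐ x ∂Q, Q.rnDeriv P x < ⊤ :=
        hQP.ae_le (Measure.rnDeriv_lt_top Q P)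
      have hmeas : Measurable fun x => (Q.rnDeriv P x) ^ l :=
        ENNReal.continuous_rpow_const.measurable.comp (Measure.measurable_rnDeriv Q P)
      have hlt_rpow : ∀ᵐ x ∂Q, (Q.rnDeriv P x) ^ l < ⊤ := by
        filter_upwards [hlt] with x hx
        exact ENNReal.rpow_lt_top_of_nonneg hl.le hx.ne
      set g : Ω → ℝ := fun x => ((Q.rnDeriv P x) ^ l).toReal with hg
      have hg_int : Integrable g Q :=
        integrable_toReal_of_lintegral_ne_top hmeas.aemeasurable hItop
      have hg_eq : ∫ x, g x ∂Q = I.toReal :=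
        integral_toReal hmeas.aemeasurable hlt_rpow
      -- pointwise inequality
      have hae : ∀ᵐ x ∂Q, l * f x ≤ g x - 1 := by
        filter_upwards [hpos, hlt] with x hx hx'
        have ht : 0 < (Q.rnDeriv P x).toReal := ENNReal.toReal_pos hx.ne' hx'.ne
        have hgx : g x = (Q.rnDeriv P x).toReal ^ l := (ENNReal.toReal_rpow _ _).symm
        have h1 : l * f x = Real.log ((Q.rnDeriv P x).toReal ^ l) :=
          (Real.log_rpow ht l).symm
        have h2 : Real.log ((Q.rnDeriv P x).toReal ^ l) ≤ (Q.rnDeriv P x).toReal ^ l - 1 :=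
          Real.log_le_sub_one_of_pos (Real.rpow_pos_of_pos ht l)
        rw [h1, hgx]
        exact h2
      have hsum : l * ∫ x, f x ∂Q ≤ I.toReal - 1 := by
        have hsub : Integrable (fun x => g x - 1) Q := hg_int.sub (integrable_const 1)
        have := integral_mono_ae (hint.const_mul l) hsub hae
        rwa [integral_const_mul, integral_sub hg_int (integrable_const 1),
          integral_const, probReal_univ, smul_eq_mul, one_mul,
          hg_eq] at this
      have hIle : I.toReal ≤ Real.exp ((L l).toReal) := by
        rcases eq_or_ne I 0 with h0 | h0
        · rw [h0]; simp [Real.exp_pos ((L l).toReal) |>.le]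
        · have hIpos : 0 < I.toReal := ENNReal.toReal_pos h0 hItop
          have hlog : ENNReal.log I = (Real.log I.toReal : EReal) :=
            ENNReal.log_pos_real h0 hItop
          rw [hlog] at hcg
          have hLbot : L l ≠ ⊥ := ne_of_gt (lt_of_lt_of_le (by simp) hLl_nn)
          have : L l = ((L l).toReal : EReal) := (EReal.coe_toReal hfin hLbot).symm
          rw [this, EReal.coe_le_coe_iff] at hcg
          exact (Real.log_le_iff_le_exp hIpos).mp hcg
      rw [le_div_iff₀ hl]
      calc (∫ x, f x ∂Q) * l = l * ∫ x, f x ∂Q := mul_comm _ _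
        _ ≤ I.toReal - 1 := hsum
        _ ≤ Real.exp ((L l).toReal) - 1 := by linarith
    -- now take the limit l → 0+
    have hd2 : HasDerivWithinAt (fun l : ℝ => Real.exp ((L l).toReal)) η (Set.Ici 0) 0 := by
      have := hderiv.exp
      have h0 : (L 0).toReal = 0 := by rw [hL0]; rfl
      rwa [h0, Real.exp_zero, one_mul] at this
    rw [hasDerivWithinAt_iff_tendsto_slope, Set.Ici_sdiff_left] at hd2
    refine ge_of_tendsto hd2 ?_
    filter_upwards [self_mem_nhdsWithin, nhdsWithin_le_nhds (Iio_mem_nhds hε)] with l hl hlε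
    have hl' : (0 : ℝ) < l := hl
    have h0 : (L 0).toReal = 0 := by rw [hL0]; rfl
    rw [slope_def_field]
    simp only [h0, Real.exp_zero, sub_zero]
    exact key l hl' hlε
  · rw [integral_undef hint]
    exact hη0
end

section
/- Let Λ : [0,∞) → [0,∞] satisfy Λ(0) = 0 and be finite on a neighborhood of 0, let P be a probability measure, and let Q ∈ U^Λ(P). Then for every r ∈ ℝ, P(log(dQ/dP) ≥ r) ≤ exp( − sup_{λ>0} { (λ+1) r − Λ(λ) } ). -/
open MeasureTheory Real Set Filter
open scoped ENNReal Classical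

variable {Ω : Type*} [MeasurableSpace Ω]

/-- **Chernoff bound over an ambiguity set (Lemma 3.1).** If `Q ∈ U^Λ(P)` then for any
`r ∈ ℝ`, `P(log(dQ/dP) ≥ r) ≤ exp(-sup_{λ>0} {(λ+1) r - Λ(λ)})`. -/
theorem ambiguitySet_chernoff (L : ℝ → EReal) (hL0 : L 0 = 0)
    (hLnn : ∀ l : ℝ, 0 ≤ l → 0 ≤ L l)
    (hLfin : ∃ ε > (0 : ℝ), ∀ l : ℝ, 0 ≤ l → l < ε → L l ≠ ⊤)
    (P Q : Measure Ω) [IsProbabilityMeasure P]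
    (hQ : Q ∈ ambiguitySet L P) (r : ℝ) :
    P {x | ENNReal.ofReal (Real.exp r) ≤ Q.rnDeriv P x} ≤
      EReal.exp (- ⨆ l ∈ Set.Ioi (0 : ℝ), ((((l + 1) * r : ℝ) : EReal) - L l)) := by
  obtain ⟨hQprob, hQP, hcgf⟩ := hQ
  set A : Set Ω := {x | ENNReal.ofReal (Real.exp r) ≤ Q.rnDeriv P x} with hA
  rw [← ENNReal.exp_log (P A), EReal.exp_le_exp_iff]
  refine EReal.le_neg_of_le_neg ?_
  refine iSup₂_le fun l hl => ?_
  have hl' : (0 : ℝ) < l := hl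
  -- case on L l
  have hLl := hcgf l hl'
  by_cases htop : L l = ⊤
  · rw [htop, EReal.sub_top]; exact bot_le
  have hbot : L l ≠ ⊥ := by
    intro h
    have h0 := hLnn l hl'.le
    rw [h] at h0
    exact absurd h0 (by simp)
  obtain ⟨c, hLtop⟩ : ∃ c : ℝ, L l = (c : EReal) :=
    ⟨(L l).toReal, (EReal.coe_toReal htop hbot).symm⟩
  rw [hLtop] at hLl
  rw [hLtop]
  -- key bound : P A ≤ exp (c - (l+1) r)
  have hint : ∫⁻ x, (Q.rnDeriv P x) ^ l ∂Q ≤ ENNReal.ofReal (Real.exp c) := by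
    have := ENNReal.exp_log (∫⁻ x, (Q.rnDeriv P x) ^ l ∂Q)
    calc ∫⁻ x, (Q.rnDeriv P x) ^ l ∂Q
        = EReal.exp (cgfLLR Q P l) := by rw [cgfLLR, ENNReal.exp_log]
      _ ≤ EReal.exp (c : EReal) := EReal.exp_monotone hLl
      _ = ENNReal.ofReal (Real.exp c) := rfl
  have hmeas : Measurable (Q.rnDeriv P) := Measure.measurable_rnDeriv Q P
  have hAmeas : MeasurableSet A := hmeas measurableSet_Ici
  have hQeq : ∫⁻ x, (Q.rnDeriv P x) ^ l ∂Q
      = ∫⁻ x, (Q.rnDeriv P x) ^ (l + 1) ∂P := by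
    rw [← MeasureTheory.lintegral_rnDeriv_mul hQP (hmeas.pow_const l).aemeasurable]
    refine lintegral_congr fun x => ?_
    rw [ENNReal.rpow_add_of_nonneg l 1 hl'.le zero_le_one, ENNReal.rpow_one, mul_comm]
  have hchern : ENNReal.ofReal (Real.exp ((l + 1) * r)) * P A
      ≤ ENNReal.ofReal (Real.exp c) := by
    have h1 : ENNReal.ofReal (Real.exp ((l + 1) * r)) * P A
        = ∫⁻ _ in A, ENNReal.ofReal (Real.exp r) ^ (l + 1) ∂P := by
      rw [setLIntegral_const]
      congr 1
      rw [mul_comm (l+1) r, Real.exp_mul, ← ENNReal.ofReal_rpow_of_pos (Real.exp_pos r)]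
    have h2 : ∫⁻ x in A, ENNReal.ofReal (Real.exp r) ^ (l + 1) ∂P
        ≤ ∫⁻ x in A, (Q.rnDeriv P x) ^ (l + 1) ∂P := by
      refine setLIntegral_mono (hmeas.pow_const _) fun x hx => ?_
      exact ENNReal.rpow_le_rpow hx (by linarith)
    calc ENNReal.ofReal (Real.exp ((l + 1) * r)) * P A
        ≤ ∫⁻ x in A, (Q.rnDeriv P x) ^ (l + 1) ∂P := h1 ▸ h2
      _ ≤ ∫⁻ x, (Q.rnDeriv P x) ^ (l + 1) ∂P := setLIntegral_le_lintegral A _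
      _ ≤ ENNReal.ofReal (Real.exp c) := hQeq ▸ hint
  have hPA : P A ≤ ENNReal.ofReal (Real.exp (c - (l + 1) * r)) := by
    have hne : ENNReal.ofReal (Real.exp ((l + 1) * r)) ≠ 0 := by
      simp [Real.exp_pos]
    rw [Real.exp_sub, ENNReal.ofReal_div_of_pos (Real.exp_pos _)]
    rw [ENNReal.le_div_iff_mul_le (Or.inl hne) (Or.inl ENNReal.ofReal_ne_top)]
    rwa [mul_comm]
  -- conclude
  have : ENNReal.log (P A) ≤ ((c - (l + 1) * r : ℝ) : EReal) := by
    calc ENNReal.log (P A) ≤ ENNReal.log (ENNReal.ofReal (Real.exp (c - (l + 1) * r))) :=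
          ENNReal.log_monotone hPA
      _ = ((c - (l + 1) * r : ℝ) : EReal) := by
          rw [show ENNReal.ofReal (Real.exp (c - (l + 1) * r))
              = EReal.exp ((c - (l + 1) * r : ℝ) : EReal) from rfl, EReal.log_exp]
  refine EReal.le_neg_of_le_neg ?_
  calc ENNReal.log (P A) ≤ ((c - (l + 1) * r : ℝ) : EReal) := this
    _ = -((((l + 1) * r : ℝ) : EReal) - (c : EReal)) := by
        rw [← EReal.coe_sub, ← EReal.coe_neg]
        norm_num
end

section
/- Let P, Q be probability measures with Q ≪ P, and for r ≥ 0 define G(r) := P(dQ/dP ≥ r). Then for every λ ≥ 0, Λ_Q^{log(dQ/dP)}(λ) = log( (λ+1) ∫₀^∞ G(z) z^λ dz ). Moreover G is non-increasing and left continuous, G(0) = 1, G(r) → 0 as r → ∞, ∫₀^∞ G(z) dz = 1, and G(r) = μ([r,∞)) where μ, the distribution of dQ/dP under P, is a probability measure on [0,∞) with mean 1. -/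
open MeasureTheory Real Set Filter
open scoped Topology
open scoped ENNReal Classical

variable {Ω : Type*} [MeasurableSpace Ω]

theorem tailG_antitone (Q P : Measure Ω) : Antitone (tailG Q P) :=
  fun _ _ hrs => measure_mono fun _ hx => le_trans (ENNReal.ofReal_le_ofReal hrs) hx

theorem tailG_left_cont (P Q : Measure Ω) [IsFiniteMeasure P] (r : ℝ) :
    ContinuousWithinAt (tailG Q P) (Set.Iio r) r := by
  have hmeas := Measure.measurable_rnDeriv Q P
  have hA := tailG_antitone Q P
  have h1 : Tendsto (tailG Q P) (𝓝[<] r) (𝓝 (sInf (tailG Q P '' Iio r))) :=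
    hA.tendsto_nhdsLT r
  have hseq : Tendsto (fun n : ℕ => r - 1/(n+1)) atTop (𝓝 r) := by
    have := tendsto_one_div_add_atTop_nhds_zero_nat (𝕜 := ℝ)
    have h2 := tendsto_const_nhds (x := r) (f := atTop (α := ℕ)) |>.sub this
    simpa using h2
  set s : ℕ → Set Ω := fun n => {x | ENNReal.ofReal (r - 1/(n+1)) ≤ Q.rnDeriv P x} with hs
  have hanti : Antitone s := fun n m hnm => by
    apply Set.setOf_subset_setOf.2
    intro x hx
    refine le_trans (ENNReal.ofReal_le_ofReal ?_) hx
    have : (1:ℝ)/(m+1) ≤ 1/(n+1) := by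
      apply one_div_le_one_div_of_le <;> push_cast <;> [positivity; simpa using hnm]
    linarith
  have hsm : ∀ n, NullMeasurableSet (s n) P :=
    fun n => (hmeas measurableSet_Ici).nullMeasurableSet
  have hiInf : P (⋂ n, s n) = ⨅ n, P (s n) :=
    hanti.measure_iInter hsm ⟨0, measure_ne_top _ _⟩
  have hInter : (⋂ n, s n) = {x | ENNReal.ofReal r ≤ Q.rnDeriv P x} := by
    ext x
    simp only [Set.mem_iInter, hs, Set.mem_setOf_eq]
    constructor
    · intro h
      have ht : Tendsto (fun n : ℕ => ENNReal.ofReal (r - 1/(n+1))) atTop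
          (𝓝 (ENNReal.ofReal r)) := (ENNReal.continuous_ofReal.tendsto r).comp hseq
      exact le_of_tendsto ht (Eventually.of_forall h)
    · intro h n
      refine le_trans (ENNReal.ofReal_le_ofReal ?_) h
      have : (0:ℝ) < 1/(n+1 : ℝ) := by positivity
      linarith
  have hinf_eq : sInf (tailG Q P '' Iio r) = tailG Q P r := by
    apply le_antisymm
    · calc sInf (tailG Q P '' Iio r) ≤ ⨅ n, P (s n) := by
            refine le_iInf fun n => sInf_le ⟨r - 1/(n+1), ?_, rfl⟩
            have : (0:ℝ) < 1/(n+1 : ℝ) := by positivity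
            exact Set.mem_Iio.2 (by linarith)
        _ = tailG Q P r := by rw [← hiInf, hInter]; rfl
    · refine le_sInf fun b hb => ?_
      obtain ⟨y, hy, rfl⟩ := hb
      exact hA (le_of_lt hy)
  show Tendsto (tailG Q P) (nhdsWithin r (Iio r)) (nhds (tailG Q P r))
  rwa [← hinf_eq]

theorem tailG_tendsto (P Q : Measure Ω) [IsFiniteMeasure P] [SigmaFinite Q] :
    Tendsto (tailG Q P) atTop (nhds 0) := by
  have hmeas := Measure.measurable_rnDeriv Q P
  have hA := tailG_antitone Q P
  have h1 : Tendsto (tailG Q P) atTop (𝓝 (⨅ r : ℝ, tailG Q P r)) := tendsto_atTop_iInf hA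
  suffices hzero : (⨅ r : ℝ, tailG Q P r) = 0 by
    rwa [hzero] at h1
  refine le_antisymm ?_ (zero_le)
  have hle : (⨅ r : ℝ, tailG Q P r) ≤ ⨅ n : ℕ, tailG Q P n := le_iInf fun n => iInf_le _ _
  refine le_trans hle ?_
  set s : ℕ → Set Ω := fun n => {x | ENNReal.ofReal n ≤ Q.rnDeriv P x} with hs
  have hanti : Antitone s := fun n m hnm =>
    Set.setOf_subset_setOf.2 fun x hx =>
      le_trans (ENNReal.ofReal_le_ofReal (by exact_mod_cast hnm)) hx
  have hsm : ∀ n, NullMeasurableSet (s n) P :=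
    fun n => (hmeas measurableSet_Ici).nullMeasurableSet
  have hiInf : P (⋂ n, s n) = ⨅ n, P (s n) :=
    hanti.measure_iInter hsm ⟨0, measure_ne_top _ _⟩
  have : (⨅ n : ℕ, tailG Q P n) = P (⋂ n, s n) := hiInf.symm
  have hsub : (⋂ n, s n) ⊆ {x | Q.rnDeriv P x = ⊤} := by
    intro x hx
    simp only [Set.mem_iInter, hs, Set.mem_setOf_eq] at hx ⊢
    by_contra h
    obtain ⟨n, hn⟩ := exists_nat_gt (Q.rnDeriv P x).toReal
    exact absurd ((ENNReal.ofReal_le_iff_le_toReal h).1 (hx n)) (not_le.2 hn)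
  have hnull : P {x | Q.rnDeriv P x = ⊤} = 0 := by
    have h := Q.rnDeriv_lt_top P
    rw [ae_iff] at h
    rw [← h]
    congr 1
    ext x
    simp [lt_top_iff_ne_top]
  rw [this]
  exact (measure_mono hsub).trans (le_of_eq hnull)

theorem cgf_eq (P Q : Measure Ω)
    [IsProbabilityMeasure P] [IsProbabilityMeasure Q] (hQP : Q ≪ P) {l : ℝ} (hl : 0 ≤ l) :
    ∫⁻ x, (Q.rnDeriv P x) ^ l ∂Q =
      ENNReal.ofReal (l + 1) * ∫⁻ z in Set.Ioi (0 : ℝ), tailG Q P z * ENNReal.ofReal (z ^ l) := by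
  have hmeas := Measure.measurable_rnDeriv Q P
  have hFm : Measurable fun x => (Q.rnDeriv P x).toReal := hmeas.ennreal_toReal
  have hl1 : (0:ℝ) < l + 1 := by linarith
  -- step 1
  have step1 : ∫⁻ x, (Q.rnDeriv P x) ^ l ∂Q = ∫⁻ x, (Q.rnDeriv P x) ^ (l + 1) ∂P := by
    rw [← lintegral_rnDeriv_mul hQP ((hmeas.pow_const l).aemeasurable)]
    refine lintegral_congr fun x => ?_
    rw [ENNReal.rpow_add_of_nonneg l 1 hl zero_le_one, ENNReal.rpow_one, mul_comm]
  -- step 2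
  have step2 : ∫⁻ x, (Q.rnDeriv P x) ^ (l + 1) ∂P
      = ∫⁻ x, ENNReal.ofReal ((Q.rnDeriv P x).toReal ^ (l + 1)) ∂P := by
    refine lintegral_congr_ae ?_
    filter_upwards [Q.rnDeriv_lt_top P] with x hx
    rw [ENNReal.toReal_rpow, ENNReal.ofReal_toReal (ENNReal.rpow_ne_top_of_nonneg hl1.le hx.ne)]
  -- layercake
  have g_intble : ∀ t > (0:ℝ), IntervalIntegrable (fun s => (l+1) * s ^ l) volume 0 t :=
    fun t _ => (intervalIntegral.intervalIntegrable_rpow (Or.inl hl)).const_mul _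
  have key := lintegral_comp_eq_lintegral_meas_le_mul P
    (f := fun x => (Q.rnDeriv P x).toReal)
    (Eventually.of_forall fun x => ENNReal.toReal_nonneg) hFm.aemeasurable g_intble
    ((ae_restrict_iff' measurableSet_Ioi).2 (Eventually.of_forall fun t ht => mul_nonneg hl1.le (Real.rpow_nonneg (le_of_lt ht) l)))
  have int_eq : ∀ s : ℝ, 0 ≤ s → (∫ t in (0:ℝ)..s, (l+1) * t ^ l) = s ^ (l+1) := by
    intro s hs
    rw [intervalIntegral.integral_const_mul, integral_rpow (Or.inl (by linarith))]
    rw [Real.zero_rpow (by positivity)]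
    field_simp
    simp
  rw [step1, step2]
  calc ∫⁻ x, ENNReal.ofReal ((Q.rnDeriv P x).toReal ^ (l + 1)) ∂P
      = ∫⁻ x, ENNReal.ofReal (∫ t in (0:ℝ)..(Q.rnDeriv P x).toReal, (l+1) * t ^ l) ∂P := by
        refine lintegral_congr fun x => ?_
        rw [int_eq _ ENNReal.toReal_nonneg]
    _ = ∫⁻ t in Ioi (0:ℝ), P {a | t ≤ (Q.rnDeriv P a).toReal} * ENNReal.ofReal ((l+1) * t ^ l) := key
    _ = ENNReal.ofReal (l + 1) * ∫⁻ z in Set.Ioi (0 : ℝ), tailG Q P z * ENNReal.ofReal (z ^ l) := by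
        rw [← lintegral_const_mul' _ _ ENNReal.ofReal_ne_top]
        refine setLIntegral_congr_fun measurableSet_Ioi (fun t ht => ?_)
        have hset : P {a | t ≤ (Q.rnDeriv P a).toReal} = tailG Q P t := by
          refine measure_congr ?_
          filter_upwards [Q.rnDeriv_lt_top P] with x hx
          exact eq_iff_iff.mpr (ENNReal.ofReal_le_iff_le_toReal hx.ne).symm
        rw [hset, ENNReal.ofReal_mul hl1.le]; ring

/-- **Structure of the tail function of the likelihood ratio (Lemma 3.2).** Let `Q ≪ P` and
`G(r) = P(dQ/dP ≥ r)`. Then for all `λ ≥ 0`,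
`Λ_Q^{log dQ/dP}(λ) = log((λ+1) ∫₀^∞ G(z) z^λ dz)`; `G` is non-increasing and left
continuous, `G(0) = 1`, `G(r) → 0` as `r → ∞`, `∫₀^∞ G(z) dz = 1`; and
`G(r) = μ([r,∞))` where `μ`, the distribution of `dQ/dP` under `P`, is a probability
measure on `[0,∞)` with mean `1`. -/
theorem tail_function_structure (P Q : Measure Ω)
    [IsProbabilityMeasure P] [IsProbabilityMeasure Q] (hQP : Q ≪ P) :
    (∀ l : ℝ, 0 ≤ l → cgfLLR Q P l =
        ENNReal.log (ENNReal.ofReal (l + 1) *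
          ∫⁻ z in Set.Ioi (0 : ℝ), tailG Q P z * ENNReal.ofReal (z ^ l))) ∧
    AntitoneOn (tailG Q P) (Set.Ici 0) ∧
    (∀ r : ℝ, ContinuousWithinAt (tailG Q P) (Set.Iio r) r) ∧
    tailG Q P 0 = 1 ∧
    Tendsto (tailG Q P) atTop (nhds 0) ∧
    (∫⁻ z in Set.Ioi (0 : ℝ), tailG Q P z) = 1 ∧
    (∀ r : ℝ, 0 ≤ r → tailG Q P r = likDist Q P (Set.Ici r)) ∧
    IsProbabilityMeasure (likDist Q P) ∧
    likDist Q P (Set.Iio 0) = 0 ∧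
    (∫⁻ t, ENNReal.ofReal t ∂(likDist Q P)) = 1 := by
  have hmeas := MeasureTheory.Measure.measurable_rnDeriv Q P
  have hFm : Measurable fun x => (Q.rnDeriv P x).toReal := hmeas.ennreal_toReal
  refine ⟨?_, ?_, ?_, ?_, ?_, ?_, ?_, ?_, ?_, ?_⟩
  · intro l hl
    unfold cgfLLR
    rw [cgf_eq P Q hQP hl]
  · exact (tailG_antitone Q P).antitoneOn _
  · exact tailG_left_cont P Q
  · simp [tailG]
  · exact tailG_tendsto P Q
  · have h := cgf_eq P Q hQP (le_refl (0:ℝ))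
    simp only [ENNReal.rpow_zero, Real.rpow_zero, ENNReal.ofReal_one, one_mul, mul_one,
      lintegral_one, measure_univ, zero_add] at h
    exact h.symm
  · intro r hr
    have hmap : likDist Q P (Set.Ici r)
        = P {x | r ≤ (Q.rnDeriv P x).toReal} := by
      show (P.map fun x => (Q.rnDeriv P x).toReal) (Set.Ici r) = _
      rw [Measure.map_apply hFm measurableSet_Ici]
      rfl
    rw [hmap]
    rcases eq_or_lt_of_le hr with h0 | h0
    · subst h0
      have h1 : {x | (0:ℝ) ≤ (Q.rnDeriv P x).toReal} = Set.univ := by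
        ext x; simp [ENNReal.toReal_nonneg]
      have h2 : {x | ENNReal.ofReal 0 ≤ Q.rnDeriv P x} = Set.univ := by
        ext x; simp
      unfold tailG
      rw [h1, h2]
    · unfold tailG
      refine measure_congr ?_
      filter_upwards [Q.rnDeriv_lt_top P] with x hx
      exact eq_iff_iff.mpr (ENNReal.ofReal_le_iff_le_toReal hx.ne)
  · exact Measure.isProbabilityMeasure_map hFm.aemeasurable
  · show (P.map fun x => (Q.rnDeriv P x).toReal) (Set.Iio 0) = 0
    rw [Measure.map_apply hFm measurableSet_Iio]
    convert measure_empty (μ := P)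
    ext x
    simp [not_lt.2 ENNReal.toReal_nonneg]
  · show ∫⁻ t, ENNReal.ofReal t ∂(P.map fun x => (Q.rnDeriv P x).toReal) = 1
    rw [lintegral_map ENNReal.measurable_ofReal hFm]
    have h : ∫⁻ x, ENNReal.ofReal (Q.rnDeriv P x).toReal ∂P = ∫⁻ x, Q.rnDeriv P x ∂P := by
      refine lintegral_congr_ae ?_
      filter_upwards [Q.rnDeriv_lt_top P] with x hx
      rw [ENNReal.ofReal_toReal hx.ne]
    rw [h, Measure.lintegral_rnDeriv hQP, measure_univ]
end

section
/- Let μ be a probability measure on [0,∞) with mean 1, let G_μ(r) := μ([r,∞)), and suppose Λ_μ(λ) := log((λ+1)∫₀^∞ G_μ(z) z^λ dz) is finite on a neighborhood of 0. Then the ambiguity set U^μ(P) contains every probability measure Q with Q ≪ P such that dQ/dP has distribution μ under P; any such Q satisfies Λ_Q^{log(dQ/dP)}(λ) = Λ_μ(λ) for all λ ≥ 0 and R(Q‖P) = 1 + ∫₀^∞ G_μ(z) log(z) dz. More generally, every Q ∈ U^μ(P) satisfies R(Q‖P) ≤ 1 + ∫₀^∞ G_μ(z) log(z) dz. -/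
open MeasureTheory Real Set Filter
open scoped ENNReal Classical

variable {Ω : Type*} [MeasurableSpace Ω]

/-! ### Elementary real inequalities -/

lemma ineq_log_le {t l : ℝ} (ht : 0 < t) (hl : 0 < l) : Real.log t ≤ (t ^ l - 1) / l := by
  rw [le_div_iff₀ hl]
  have h := Real.log_le_sub_one_of_pos (Real.rpow_pos_of_pos ht l)
  rw [Real.log_rpow ht] at h
  linarith [h]

lemma ineq_abs_le_one {t l : ℝ} (ht : 0 < t) (ht1 : t ≤ 1) (hl : 0 < l) :
    |(t ^ l - 1) / l| ≤ -Real.log t := by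
  have h1 := ineq_log_le ht hl
  have h2 : (t ^ l - 1) / l ≤ 0 :=
    div_nonpos_iff.mpr (Or.inr ⟨by linarith [Real.rpow_le_one ht.le ht1 hl.le], hl.le⟩)
  rw [abs_of_nonpos h2]; linarith

lemma ineq_exp_sub_one {x : ℝ} (hx : 0 ≤ x) : Real.exp x - 1 ≤ x * Real.exp x := by
  have h1 := Real.add_one_le_exp (-x)
  have h2 : Real.exp x * (1 - x) ≤ Real.exp x * Real.exp (-x) := by
    apply mul_le_mul_of_nonneg_left (by linarith) (Real.exp_pos x).le
  rw [← Real.exp_add, add_neg_cancel, Real.exp_zero] at h2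
  nlinarith [Real.exp_pos x]

lemma ineq_rpow_sub_one_le {t l : ℝ} (ht : 1 ≤ t) (hl : 0 < l) :
    t ^ l - 1 ≤ l * (Real.log t * t ^ l) := by
  have ht0 : 0 < t := lt_of_lt_of_le one_pos ht
  have hrw : t ^ l = Real.exp (l * Real.log t) := by
    rw [Real.rpow_def_of_pos ht0, mul_comm]
  have hx : 0 ≤ l * Real.log t := mul_nonneg hl.le (Real.log_nonneg ht)
  have := ineq_exp_sub_one hx
  rw [hrw]; nlinarith [this]

lemma ineq_ge_one {t l e : ℝ} (ht : 1 ≤ t) (hl : 0 < l) (hle : l ≤ e) :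
    (t ^ l - 1) / l ≤ t ^ (2 * e) * e⁻¹ := by
  have he : 0 < e := lt_of_lt_of_le hl hle
  have ht0 : 0 < t := lt_of_lt_of_le one_pos ht
  have h1 : (t ^ l - 1) / l ≤ Real.log t * t ^ l := by
    rw [div_le_iff₀ hl]
    nlinarith [ineq_rpow_sub_one_le ht hl]
  have h2 : Real.log t ≤ t ^ e * e⁻¹ := by
    have := ineq_log_le ht0 he
    rw [div_eq_mul_inv] at this
    have : (t ^ e - 1) * e⁻¹ ≤ t ^ e * e⁻¹ := by
      apply mul_le_mul_of_nonneg_right (by linarith) (inv_nonneg.mpr he.le)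
    linarith [ineq_log_le ht0 he, this]
  have h3 : t ^ l ≤ t ^ e := Real.rpow_le_rpow_of_exponent_le ht hle
  have h4 : t ^ e * t ^ e = t ^ (2 * e) := by
    rw [← Real.rpow_add ht0]; ring_nf
  have h5 : Real.log t * t ^ l ≤ (t ^ e * e⁻¹) * t ^ e := by
    have hlogt := Real.log_nonneg ht
    have := Real.rpow_nonneg ht0.le l
    have := Real.rpow_nonneg ht0.le e
    nlinarith
  calc (t ^ l - 1) / l ≤ Real.log t * t ^ l := h1
    _ ≤ (t ^ e * e⁻¹) * t ^ e := h5
    _ = t ^ (2 * e) * e⁻¹ := by rw [← h4]; ring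

lemma ineq_one_le_rpow {t l : ℝ} (ht : 1 ≤ t) (hl : 0 ≤ l) : 1 ≤ t ^ l := by
  have := Real.rpow_le_rpow_of_exponent_le ht hl
  simpa [Real.rpow_zero] using Real.rpow_le_rpow_of_exponent_le ht hl

lemma ineq_neg_log {t : ℝ} (ht : 0 ≤ t) : t * max (-Real.log t) 0 ≤ 1 := by
  rcases le_or_gt (-Real.log t) 0 with h | h
  · rw [max_eq_right h, mul_zero]; exact zero_le_one
  · rw [max_eq_left h.le]
    rcases eq_or_lt_of_le ht with h0 | h0
    · simp [← h0]
    · have hinv : Real.log t⁻¹ ≤ t⁻¹ - 1 := Real.log_le_sub_one_of_pos (by positivity)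
      rw [Real.log_inv] at hinv
      have : t * -Real.log t ≤ t * (t⁻¹ - 1) :=
        mul_le_mul_of_nonneg_left hinv ht
      have ht' : t * (t⁻¹ - 1) = 1 - t := by field_simp
      linarith

/-! ### Pointwise limits -/

lemma tendsto_rpow_slope {z : ℝ} (hz : 0 < z) :
    Tendsto (fun l : ℝ => (z ^ l - 1) / l) (nhdsWithin 0 (Ioi 0)) (nhds (Real.log z)) := by
  have hd : HasDerivAt (fun l : ℝ => z ^ l) (Real.log z) 0 := by
    have he : HasDerivAt (fun l : ℝ => Real.exp (Real.log z * l)) (Real.log z) 0 := by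
      simpa using ((hasDerivAt_id (0:ℝ)).const_mul (Real.log z)).exp
    refine he.congr_of_eventuallyEq ?_
    filter_upwards with l
    rw [Real.rpow_def_of_pos hz]
  have h := hasDerivAt_iff_tendsto_slope.mp hd
  have h2 := h.mono_left (nhdsWithin_mono (0:ℝ) (fun x hx => (ne_of_gt hx : x ≠ 0)))
  refine h2.congr' ?_
  filter_upwards [self_mem_nhdsWithin] with l hl
  have hl0 : l ≠ 0 := ne_of_gt hl
  simp [slope_def_field, Real.rpow_zero, sub_zero]

lemma tendsto_main_slope {z : ℝ} (hz : 0 < z) :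
    Tendsto (fun l : ℝ => ((l + 1) * z ^ l - 1) / l) (nhdsWithin 0 (Ioi 0))
      (nhds (1 + Real.log z)) := by
  have h1 : Tendsto (fun l : ℝ => z ^ l) (nhdsWithin 0 (Ioi 0)) (nhds 1) := by
    have hc : Continuous (fun l : ℝ => Real.exp (Real.log z * l)) := by continuity
    have := (hc.tendsto 0).mono_left (nhdsWithin_le_nhds (s := Ioi (0:ℝ)))
    simp only [mul_zero, Real.exp_zero] at this
    refine this.congr ?_
    intro l; rw [Real.rpow_def_of_pos hz]
  have h2 := tendsto_rpow_slope hz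
  have h3 := h1.add h2
  refine h3.congr' ?_
  filter_upwards [self_mem_nhdsWithin] with l hl
  have hl0 : (l:ℝ) ≠ 0 := ne_of_gt hl
  field_simp
  ring



/-- The argument of the log in `Lmu`. -/
noncomputable def Amu (μ : Measure ℝ) (l : ℝ) : ℝ≥0∞ :=
  ENNReal.ofReal (l + 1) * ∫⁻ z in Set.Ioi (0 : ℝ), Gmu μ z * ENNReal.ofReal (z ^ l)

noncomputable def Bmu (μ : Measure ℝ) (l : ℝ) : ℝ≥0∞ :=
  ∫⁻ z in Set.Ioi (0 : ℝ), Gmu μ z * ENNReal.ofReal (z ^ l)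

lemma Lmu_eq_log_Amu (μ : Measure ℝ) (l : ℝ) : Lmu μ l = ENNReal.log (Amu μ l) := rfl

lemma Amu_eq (μ : Measure ℝ) (l : ℝ) : Amu μ l = ENNReal.ofReal (l + 1) * Bmu μ l := rfl

lemma gmu_meas (μ : Measure ℝ) : Measurable (Gmu μ) :=
  Antitone.measurable (fun _ _ hab => measure_mono (Set.Ici_subset_Ici.mpr hab))

lemma gmu_lt_top (μ : Measure ℝ) [IsProbabilityMeasure μ] (z : ℝ) : Gmu μ z < ⊤ :=
  lt_of_le_of_lt prob_le_one (by norm_num)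

lemma gmu_toReal_le_one (μ : Measure ℝ) [IsProbabilityMeasure μ] (z : ℝ) :
    (Gmu μ z).toReal ≤ 1 :=
  ENNReal.toReal_le_of_le_ofReal zero_le_one (by simpa [Gmu] using prob_le_one)

lemma psi_meas (μ : Measure ℝ) (l : ℝ) :
    Measurable (fun z => Gmu μ z * ENNReal.ofReal (z ^ l)) :=
  (gmu_meas μ).mul (ENNReal.measurable_ofReal.comp (by fun_prop))

/-- The layer-cake identity : `∫ t^(l+1) dμ = (l+1)∫_{z>0} μ[z,∞) z^l dz`. -/
lemma layercake_rpow (μ : Measure ℝ) (hsupp : μ (Set.Iio 0) = 0) {l : ℝ} (hl : 0 ≤ l) :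
    ∫⁻ t, ENNReal.ofReal t ^ (l + 1) ∂μ = Amu μ l := by
  have f_nn : 0 ≤ᵐ[μ] (id : ℝ → ℝ) := by
    rw [Filter.EventuallyLE, ae_iff]
    have : {a : ℝ | ¬ (0:ℝ→ℝ) a ≤ id a} = Set.Iio 0 := by
      ext t; simp [not_le]
    rw [this]; exact hsupp
  have key := lintegral_comp_eq_lintegral_meas_le_mul μ (f := id)
      (g := fun t => (l + 1) * t ^ l) f_nn aemeasurable_id
      (fun t _ => (intervalIntegral.intervalIntegrable_rpow' (by linarith)).const_mul _)
      (by filter_upwards [self_mem_ae_restrict measurableSet_Ioi] with t ht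
          exact mul_nonneg (by linarith) (Real.rpow_nonneg (le_of_lt ht) l))
  have hl1 : l + 1 ≠ 0 := by linarith
  have lhs_eq : ∫⁻ ω, ENNReal.ofReal (∫ t in (0:ℝ)..(id ω), (l + 1) * t ^ l) ∂μ
      = ∫⁻ t, ENNReal.ofReal t ^ (l + 1) ∂μ := by
    apply lintegral_congr_ae
    filter_upwards [f_nn] with ω hω
    have : ∫ t in (0:ℝ)..(id ω), (l + 1) * t ^ l = ω ^ (l + 1) := by
      rw [intervalIntegral.integral_const_mul, integral_rpow (Or.inl (by linarith))]
      rw [Real.zero_rpow hl1]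
      field_simp
      simp
    rw [this]
    exact (ENNReal.ofReal_rpow_of_nonneg hω (by linarith)).symm
  have rhs_eq : ∫⁻ t in Set.Ioi (0:ℝ), μ {a | t ≤ id a} * ENNReal.ofReal ((l + 1) * t ^ l)
      = Amu μ l := by
    rw [Amu_eq, Bmu, ← lintegral_const_mul' _ _ ENNReal.ofReal_ne_top]
    apply lintegral_congr_ae
    filter_upwards [self_mem_ae_restrict measurableSet_Ioi] with t _
    have : {a : ℝ | t ≤ id a} = Set.Ici t := by ext a; simp
    rw [this, ENNReal.ofReal_mul (by linarith)]
    show Gmu μ t * _ = _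
    ring
  rw [← lhs_eq, key, rhs_eq]

lemma Amu_zero (μ : Measure ℝ) (hsupp : μ (Set.Iio 0) = 0)
    (hmean : (∫⁻ t, ENNReal.ofReal t ∂μ) = 1) : Amu μ 0 = 1 := by
  have := layercake_rpow μ hsupp (le_refl (0:ℝ))
  rw [zero_add] at this
  simp only [ENNReal.rpow_one] at this
  rw [← this, hmean]

lemma Bmu_zero (μ : Measure ℝ) (hsupp : μ (Set.Iio 0) = 0)
    (hmean : (∫⁻ t, ENNReal.ofReal t ∂μ) = 1) : Bmu μ 0 = 1 := by
  have h := Amu_zero μ hsupp hmean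
  rwa [Amu_eq, zero_add, ENNReal.ofReal_one, one_mul] at h

lemma Bmu_ne_top (μ : Measure ℝ) {l : ℝ} (hl : 0 ≤ l) (hA : Amu μ l ≠ ⊤) : Bmu μ l ≠ ⊤ := by
  intro h
  apply hA
  rw [Amu_eq, h, ENNReal.mul_top (by simp; linarith)]

/-- Realization of `Bmu` as a Bochner integral, with integrability. -/
lemma integrableOn_gR_rpow (μ : Measure ℝ) [IsProbabilityMeasure μ] {l : ℝ}
    (hB : Bmu μ l ≠ ⊤) :
    IntegrableOn (fun z => (Gmu μ z).toReal * z ^ l) (Set.Ioi 0) volume ∧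
      ∫ z in Set.Ioi (0:ℝ), (Gmu μ z).toReal * z ^ l = (Bmu μ l).toReal := by
  set ψ := fun z => Gmu μ z * ENNReal.ofReal (z ^ l) with hψ
  have hmψ : Measurable ψ := psi_meas μ l
  have haee : ∀ᵐ z ∂(volume.restrict (Set.Ioi (0:ℝ))),
      (ψ z).toReal = (Gmu μ z).toReal * z ^ l := by
    filter_upwards [self_mem_ae_restrict measurableSet_Ioi] with z hz
    rw [hψ, ENNReal.toReal_mul, ENNReal.toReal_ofReal (Real.rpow_nonneg (le_of_lt hz) l)]
  have h1 : Integrable (fun z => (ψ z).toReal) (volume.restrict (Set.Ioi (0:ℝ))) :=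
    integrable_toReal_of_lintegral_ne_top hmψ.aemeasurable hB
  constructor
  · exact h1.congr haee
  · rw [← integral_congr_ae haee,
      integral_toReal hmψ.aemeasurable
        (by filter_upwards with z
            exact ENNReal.mul_lt_top (gmu_lt_top μ z) ENNReal.ofReal_lt_top)]
    rfl

lemma integrableOn_gR (μ : Measure ℝ) [IsProbabilityMeasure μ]
    (hsupp : μ (Set.Iio 0) = 0) (hmean : (∫⁻ t, ENNReal.ofReal t ∂μ) = 1) :
    IntegrableOn (fun z => (Gmu μ z).toReal) (Set.Ioi 0) volume ∧
      ∫ z in Set.Ioi (0:ℝ), (Gmu μ z).toReal = 1 := by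
  have h0 : Bmu μ 0 ≠ ⊤ := by rw [Bmu_zero μ hsupp hmean]; exact ENNReal.one_ne_top
  have := integrableOn_gR_rpow μ h0
  simp only [Real.rpow_zero, mul_one] at this
  rw [Bmu_zero μ hsupp hmean] at this
  simpa using this

/-- `-log z ≤ 2 z^(-1/2)` on `(0,1]`; integrability of the dominating function on `(0,1]`. -/
lemma neg_log_le_rpow {z : ℝ} (hz : 0 < z) : -Real.log z ≤ 2 * z ^ (-(2⁻¹:ℝ)) := by
  have h1 : Real.log (z ^ (-(2⁻¹:ℝ))) ≤ z ^ (-(2⁻¹:ℝ)) - 1 :=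
    Real.log_le_sub_one_of_pos (Real.rpow_pos_of_pos hz _)
  rw [Real.log_rpow hz] at h1
  nlinarith [Real.rpow_pos_of_pos hz (-(2⁻¹:ℝ))]

lemma integrableOn_rpow_Ioc : IntegrableOn (fun z : ℝ => z ^ (-(2⁻¹:ℝ))) (Set.Ioc 0 1) volume :=
  (intervalIntegrable_iff_integrableOn_Ioc_of_le zero_le_one).mp
    (intervalIntegral.intervalIntegrable_rpow' (by norm_num))

lemma integrableOn_gR_log (μ : Measure ℝ) [IsProbabilityMeasure μ] {e : ℝ} (he : 0 < e)
    (hInt : IntegrableOn (fun z => (Gmu μ z).toReal * z ^ e) (Set.Ioi 0) volume) :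
    IntegrableOn (fun z => (Gmu μ z).toReal * Real.log z) (Set.Ioi 0) volume := by
  have hmeas : AEStronglyMeasurable (fun z => (Gmu μ z).toReal * Real.log z)
      (volume.restrict (Set.Ioi (0:ℝ))) :=
    ((gmu_meas μ).ennreal_toReal.mul Real.measurable_log).aestronglyMeasurable
  rw [← Set.Ioc_union_Ioi_eq_Ioi (zero_le_one : (0:ℝ) ≤ 1)]
  apply IntegrableOn.union
  · apply Integrable.mono' ((integrableOn_rpow_Ioc).const_mul 2)
      (hmeas.mono_measure (Measure.restrict_mono Set.Ioc_subset_Ioi_self le_rfl))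
    filter_upwards [self_mem_ae_restrict measurableSet_Ioc] with z hz
    have hz0 : 0 < z := hz.1
    have hlog : Real.log z ≤ 0 := Real.log_nonpos hz0.le hz.2
    rw [Real.norm_eq_abs]
    have h1 : |(Gmu μ z).toReal * Real.log z| ≤ |Real.log z| := by
      rw [abs_mul]
      calc |(Gmu μ z).toReal| * |Real.log z| ≤ 1 * |Real.log z| := by
            apply mul_le_mul_of_nonneg_right _ (abs_nonneg _)
            rw [abs_of_nonneg ENNReal.toReal_nonneg]
            exact gmu_toReal_le_one μ z
        _ = |Real.log z| := one_mul _
    calc |(Gmu μ z).toReal * Real.log z| ≤ |Real.log z| := h1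
      _ = -Real.log z := abs_of_nonpos hlog
      _ ≤ 2 * z ^ (-(2⁻¹:ℝ)) := neg_log_le_rpow hz0
  · apply Integrable.mono' ((hInt.mono_set (Set.Ioi_subset_Ioi zero_le_one)).const_mul e⁻¹)
      (hmeas.mono_measure (Measure.restrict_mono (Set.Ioi_subset_Ioi zero_le_one) le_rfl))
    filter_upwards [self_mem_ae_restrict measurableSet_Ioi] with z hz
    have hz1 : (1:ℝ) < z := hz
    have hz0 : (0:ℝ) < z := lt_trans one_pos hz1
    have hlog : 0 ≤ Real.log z := Real.log_nonneg hz1.le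
    have hle : Real.log z ≤ z ^ e * e⁻¹ := by
      have h := ineq_log_le hz0 he
      rw [div_eq_mul_inv] at h
      have h2 : (z ^ e - 1) * e⁻¹ ≤ z ^ e * e⁻¹ :=
        mul_le_mul_of_nonneg_right (by linarith) (inv_nonneg.mpr he.le)
      linarith
    rw [Real.norm_eq_abs, abs_of_nonneg (mul_nonneg ENNReal.toReal_nonneg hlog)]
    calc (Gmu μ z).toReal * Real.log z ≤ (Gmu μ z).toReal * (z ^ e * e⁻¹) :=
          mul_le_mul_of_nonneg_left hle ENNReal.toReal_nonneg
      _ = e⁻¹ * ((Gmu μ z).toReal * z ^ e) := by ring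

lemma split_q {t l : ℝ} (hl : l ≠ 0) : ((l + 1) * t - 1) / l = t + (t - 1) / l := by
  field_simp; ring

/-- Main μ-side limit: `(Amu(l) - 1)/l → 1 + ∫ G log z` as `l → 0⁺`. -/
lemma tendsto_Amu_slope (μ : Measure ℝ) [IsProbabilityMeasure μ]
    (hsupp : μ (Set.Iio 0) = 0) (hmean : (∫⁻ t, ENNReal.ofReal t ∂μ) = 1)
    {ε : ℝ} (hε : 0 < ε) (hA : ∀ l, 0 ≤ l → l < ε → Amu μ l ≠ ⊤) :
    Tendsto (fun l => ((Amu μ l).toReal - 1) / l) (nhdsWithin 0 (Set.Ioi 0))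
      (nhds (1 + ∫ z in Set.Ioi (0:ℝ), (Gmu μ z).toReal * Real.log z)) := by
  set e := ε / 4 with he_def
  have he : 0 < e := by positivity
  have h2e : 2 * e < ε := by rw [he_def]; linarith
  have hInt2e : IntegrableOn (fun z => (Gmu μ z).toReal * z ^ (2 * e)) (Set.Ioi 0) volume :=
    (integrableOn_gR_rpow μ (Bmu_ne_top μ (by linarith) (hA (2 * e) (by linarith) h2e))).1
  have hInte : IntegrableOn (fun z => (Gmu μ z).toReal * z ^ e) (Set.Ioi 0) volume :=
    (integrableOn_gR_rpow μ (Bmu_ne_top μ he.le (hA e he.le (by linarith)))).1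
  have hIntLog := integrableOn_gR_log μ he hInte
  have hgR := integrableOn_gR μ hsupp hmean
  set bound : ℝ → ℝ := fun z =>
    (Gmu μ z).toReal * (if z ≤ 1 then 1 - Real.log z else (1 + e⁻¹) * z ^ (2 * e)) with hbd
  have hbound_meas : Measurable bound := by
    apply ((gmu_meas μ).ennreal_toReal).mul
    exact Measurable.ite (measurableSet_le measurable_id measurable_const)
      (measurable_const.sub Real.measurable_log)
      ((by fun_prop : Measurable fun z : ℝ => z ^ (2*e)).const_mul _)
  have hbound_int : Integrable bound (volume.restrict (Set.Ioi (0:ℝ))) := by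
    rw [← Set.Ioc_union_Ioi_eq_Ioi (zero_le_one : (0:ℝ) ≤ 1)]
    apply IntegrableOn.union
    · apply Integrable.mono'
        (((integrableOn_const (by simp)).add
          (integrableOn_rpow_Ioc.const_mul 2)) :
          IntegrableOn (fun z : ℝ => 1 + 2 * z ^ (-(2⁻¹:ℝ))) (Set.Ioc 0 1) volume)
        hbound_meas.aestronglyMeasurable.restrict
      filter_upwards [self_mem_ae_restrict measurableSet_Ioc] with z hz
      have hz0 : (0:ℝ) < z := hz.1
      have hlog : Real.log z ≤ 0 := Real.log_nonpos hz0.le hz.2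
      rw [Real.norm_eq_abs, hbd]
      simp only [if_pos hz.2]
      rw [abs_of_nonneg (mul_nonneg ENNReal.toReal_nonneg (by linarith))]
      calc (Gmu μ z).toReal * (1 - Real.log z) ≤ 1 * (1 - Real.log z) :=
            mul_le_mul_of_nonneg_right (gmu_toReal_le_one μ z) (by linarith)
        _ = 1 + (-Real.log z) := by ring
        _ ≤ 1 + 2 * z ^ (-(2⁻¹:ℝ)) := by linarith [neg_log_le_rpow hz0]
    · apply Integrable.congr
        (((hInt2e.mono_set (Set.Ioi_subset_Ioi zero_le_one))).const_mul (1 + e⁻¹))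
      filter_upwards [self_mem_ae_restrict measurableSet_Ioi] with z hz
      rw [hbd]
      simp only [if_neg (not_le.mpr (Set.mem_Ioi.mp hz))]
      ring
  have hev : Set.Ioc 0 e ∈ nhdsWithin (0:ℝ) (Set.Ioi 0) :=
    Ioc_mem_nhdsGT_of_mem ⟨le_rfl, he⟩
  have hdct := tendsto_integral_filter_of_dominated_convergence
    (μ := volume.restrict (Set.Ioi (0:ℝ)))
    (F := fun (l : ℝ) (z : ℝ) => (Gmu μ z).toReal * (((l + 1) * z ^ l - 1) / l))
    (f := fun z => (Gmu μ z).toReal * (1 + Real.log z)) bound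
    (by filter_upwards with l
        exact (((gmu_meas μ).ennreal_toReal).mul
          ((by fun_prop : Measurable fun z : ℝ => z ^ l).const_mul (l+1)
            |>.sub measurable_const |>.div_const l)).aestronglyMeasurable.restrict)
    (by filter_upwards [hev] with l hl
        rw [ae_restrict_iff' measurableSet_Ioi]
        filter_upwards with z hz
        have hz0 : (0:ℝ) < z := hz
        have hl0 : 0 < l := hl.1
        rw [Real.norm_eq_abs, abs_mul, abs_of_nonneg (ENNReal.toReal_nonneg :
          (0:ℝ) ≤ (Gmu μ z).toReal), hbd]
        rcases le_or_gt z 1 with hz1 | hz1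
        · simp only [if_pos hz1]
          apply mul_le_mul_of_nonneg_left _ ENNReal.toReal_nonneg
          rw [split_q hl0.ne']
          calc |z ^ l + (z ^ l - 1) / l| ≤ |z ^ l| + |(z ^ l - 1) / l| := abs_add_le _ _
            _ ≤ 1 + (-Real.log z) := by
                have h1 : |z ^ l| ≤ 1 := by
                  rw [abs_of_nonneg (Real.rpow_nonneg hz0.le l)]
                  exact Real.rpow_le_one hz0.le hz1 hl0.le
                linarith [ineq_abs_le_one hz0 hz1 hl0]
            _ = 1 - Real.log z := by ring
        · simp only [if_neg (not_le.mpr hz1)]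
          apply mul_le_mul_of_nonneg_left _ ENNReal.toReal_nonneg
          rw [split_q hl0.ne']
          have hz1' : (1:ℝ) ≤ z := hz1.le
          have ha : 0 ≤ z ^ l - 1 := by linarith [ineq_one_le_rpow hz1' hl0.le]
          have hq : 0 ≤ z ^ l + (z ^ l - 1) / l := by positivity
          rw [abs_of_nonneg hq]
          have h1 : z ^ l ≤ z ^ (2 * e) :=
            Real.rpow_le_rpow_of_exponent_le hz1' (by linarith [hl.2])
          have h2 : (z ^ l - 1) / l ≤ z ^ (2 * e) * e⁻¹ := ineq_ge_one hz1' hl0 hl.2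
          calc z ^ l + (z ^ l - 1) / l ≤ z ^ (2 * e) + z ^ (2 * e) * e⁻¹ := by linarith
            _ = (1 + e⁻¹) * z ^ (2 * e) := by ring)
    hbound_int
    (by filter_upwards [self_mem_ae_restrict measurableSet_Ioi] with z hz
        exact (tendsto_main_slope (hz : (0:ℝ) < z)).const_mul ((Gmu μ z).toReal))
  have hval : ∫ z in Set.Ioi (0:ℝ), (Gmu μ z).toReal * (1 + Real.log z)
      = 1 + ∫ z in Set.Ioi (0:ℝ), (Gmu μ z).toReal * Real.log z := by
    have : (fun z => (Gmu μ z).toReal * (1 + Real.log z))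
        = fun z => (Gmu μ z).toReal + (Gmu μ z).toReal * Real.log z := by
      funext z; ring
    rw [this, integral_add hgR.1 hIntLog, hgR.2]
  rw [hval] at hdct
  refine hdct.congr' ?_
  filter_upwards [Ioo_mem_nhdsGT_of_mem (⟨le_rfl, hε⟩ : (0:ℝ) ∈ Set.Ico 0 ε)] with l hl
  have hl0 : 0 < l := hl.1
  have hBl := Bmu_ne_top μ hl0.le (hA l hl0.le hl.2)
  obtain ⟨hIntl, hVall⟩ := integrableOn_gR_rpow μ hBl
  have hfun : (fun z => (Gmu μ z).toReal * (((l + 1) * z ^ l - 1) / l))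
      = fun z => l⁻¹ * ((l + 1) * ((Gmu μ z).toReal * z ^ l) - (Gmu μ z).toReal) := by
    funext z
    field_simp
  rw [hfun, integral_const_mul, integral_sub (hIntl.const_mul _) hgR.1,
    integral_const_mul, hVall, hgR.2]
  have hAl : (Amu μ l).toReal = (l + 1) * (Bmu μ l).toReal := by
    rw [Amu_eq, ENNReal.toReal_mul, ENNReal.toReal_ofReal (by linarith)]
  rw [hAl, div_eq_inv_mul]


/-! ### Q-side lemmas -/

section Qside

variable {Q P : Measure Ω}

lemma q_rpow_meas (Q P : Measure Ω) (l : ℝ) : Measurable fun x => (Q.rnDeriv P x) ^ l :=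
  (by fun_prop : Measurable fun y : ℝ≥0∞ => y ^ l).comp (Measure.measurable_rnDeriv Q P)

lemma q_ae_lt_top [IsProbabilityMeasure Q] (hQP : Q ≪ P) :
    ∀ᵐ x ∂Q, Q.rnDeriv P x < ⊤ :=
  (Measure.rnDeriv_lt_top Q P).filter_mono hQP.ae_le

lemma q_ae_pos [IsProbabilityMeasure Q] [IsProbabilityMeasure P] (hQP : Q ≪ P) :
    ∀ᵐ x ∂Q, 0 < (Q.rnDeriv P x).toReal := by
  filter_upwards [Measure.rnDeriv_pos hQP, q_ae_lt_top hQP] with x h1 h2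
  exact ENNReal.toReal_pos h1.ne' h2.ne

lemma q_integral_rpow [IsProbabilityMeasure Q] (hQP : Q ≪ P) {l : ℝ} (hl : 0 < l)
    (hfin : ∫⁻ x, (Q.rnDeriv P x) ^ l ∂Q ≠ ⊤) :
    Integrable (fun x => (Q.rnDeriv P x).toReal ^ l) Q ∧
      ∫ x, (Q.rnDeriv P x).toReal ^ l ∂Q = (∫⁻ x, (Q.rnDeriv P x) ^ l ∂Q).toReal := by
  have hfx : (fun x => (Q.rnDeriv P x).toReal ^ l)
      = fun x => ((Q.rnDeriv P x) ^ l).toReal := funext fun x => ENNReal.toReal_rpow _ _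
  rw [hfx]
  refine ⟨integrable_toReal_of_lintegral_ne_top (q_rpow_meas Q P l).aemeasurable hfin, ?_⟩
  apply integral_toReal (q_rpow_meas Q P l).aemeasurable
  filter_upwards [q_ae_lt_top hQP] with x hx
  exact ENNReal.rpow_lt_top_of_nonneg hl.le hx.ne

lemma q_slope_integral [IsProbabilityMeasure Q] (hQP : Q ≪ P) {l : ℝ} (hl : 0 < l)
    (hfin : ∫⁻ x, (Q.rnDeriv P x) ^ l ∂Q ≠ ⊤) :
    Integrable (fun x => ((Q.rnDeriv P x).toReal ^ l - 1) / l) Q ∧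
      ∫ x, ((Q.rnDeriv P x).toReal ^ l - 1) / l ∂Q
        = ((∫⁻ x, (Q.rnDeriv P x) ^ l ∂Q).toReal - 1) / l := by
  obtain ⟨hint, hval⟩ := q_integral_rpow hQP hl hfin
  have hfun : (fun x => ((Q.rnDeriv P x).toReal ^ l - 1) / l)
      = fun x => l⁻¹ * ((Q.rnDeriv P x).toReal ^ l - 1) := by
    funext x; rw [div_eq_inv_mul]
  constructor
  · rw [hfun]; exact ((hint.sub (integrable_const 1)).const_mul _)
  · rw [hfun, integral_const_mul, integral_sub hint (integrable_const 1), hval,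
      integral_const, probReal_univ]
    simp [div_eq_inv_mul]

lemma q_neglog_le_one [IsProbabilityMeasure Q] [IsProbabilityMeasure P] (hQP : Q ≪ P) :
    ∫⁻ x, ENNReal.ofReal (max (-Real.log ((Q.rnDeriv P x).toReal)) 0) ∂Q ≤ 1 := by
  have hmg : Measurable fun x =>
      ENNReal.ofReal (max (-Real.log ((Q.rnDeriv P x).toReal)) 0) := by
    apply ENNReal.measurable_ofReal.comp
    exact ((Real.measurable_log.comp
      (Measure.measurable_rnDeriv Q P).ennreal_toReal).neg.max measurable_const)
  set g := fun x => ENNReal.ofReal (max (-Real.log ((Q.rnDeriv P x).toReal)) 0) with hg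
  have hQeq : ∫⁻ x, g x ∂Q = ∫⁻ x, ((Q.rnDeriv P) * g) x ∂P := by
    conv_lhs => rw [← Measure.withDensity_rnDeriv_eq Q P hQP]
    exact lintegral_withDensity_eq_lintegral_mul P (Measure.measurable_rnDeriv Q P) hmg
  rw [hQeq]
  calc ∫⁻ x, ((Q.rnDeriv P) * g) x ∂P
      ≤ ∫⁻ _, 1 ∂P := by
        apply lintegral_mono_ae
        filter_upwards [Measure.rnDeriv_lt_top Q P] with x hx
        have h1 : Q.rnDeriv P x = ENNReal.ofReal ((Q.rnDeriv P x).toReal) :=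
          (ENNReal.ofReal_toReal hx.ne).symm
        show Q.rnDeriv P x * g x ≤ 1
        rw [hg, h1, ← ENNReal.ofReal_mul ENNReal.toReal_nonneg]
        calc ENNReal.ofReal _ ≤ ENNReal.ofReal 1 :=
              ENNReal.ofReal_le_ofReal (ineq_neg_log ENNReal.toReal_nonneg)
          _ = 1 := ENNReal.ofReal_one
    _ = 1 := by simp

lemma q_log_integrable [IsProbabilityMeasure Q] [IsProbabilityMeasure P] (hQP : Q ≪ P)
    {l : ℝ} (hl : 0 < l) (hfin : ∫⁻ x, (Q.rnDeriv P x) ^ l ∂Q ≠ ⊤) :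
    Integrable (fun x => Real.log ((Q.rnDeriv P x).toReal)) Q := by
  have hmeas : Measurable fun x => Real.log ((Q.rnDeriv P x).toReal) :=
    Real.measurable_log.comp (Measure.measurable_rnDeriv Q P).ennreal_toReal
  refine ⟨hmeas.aestronglyMeasurable, ?_⟩
  rw [hasFiniteIntegral_iff_norm]
  have hsplit : ∀ᵐ x ∂Q, ENNReal.ofReal ‖Real.log ((Q.rnDeriv P x).toReal)‖
      ≤ (Q.rnDeriv P x) ^ l * ENNReal.ofReal l⁻¹
        + ENNReal.ofReal (max (-Real.log ((Q.rnDeriv P x).toReal)) 0) := by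
    filter_upwards [q_ae_pos hQP, q_ae_lt_top hQP] with x hpos hlt
    set t := (Q.rnDeriv P x).toReal with ht
    have habs : ‖Real.log t‖ ≤ max (Real.log t) 0 + max (-Real.log t) 0 := by
      rw [Real.norm_eq_abs]
      rcases abs_cases (Real.log t) with h | h <;> rw [h.1] <;>
        linarith [le_max_left (Real.log t) (0:ℝ), le_max_left (-Real.log t) (0:ℝ),
          le_max_right (Real.log t) (0:ℝ), le_max_right (-Real.log t) (0:ℝ)]
    have h1 : ENNReal.ofReal (max (Real.log t) 0) ≤ (Q.rnDeriv P x) ^ l * ENNReal.ofReal l⁻¹ := by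
      have hrw : (Q.rnDeriv P x) ^ l = ENNReal.ofReal (t ^ l) := by
        rw [ht, ENNReal.toReal_rpow, ENNReal.ofReal_toReal
          (ENNReal.rpow_lt_top_of_nonneg hl.le hlt.ne).ne]
      rw [hrw, ← ENNReal.ofReal_mul (Real.rpow_nonneg ENNReal.toReal_nonneg l)]
      apply ENNReal.ofReal_le_ofReal
      rcases le_or_gt (Real.log t) 0 with h | h
      · rw [max_eq_right h]; positivity
      · rw [max_eq_left h.le]
        have := ineq_log_le hpos hl
        have h2 : (t ^ l - 1) / l ≤ t ^ l * l⁻¹ := by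
          rw [div_eq_mul_inv]
          apply mul_le_mul_of_nonneg_right (by linarith) (inv_nonneg.mpr hl.le)
        linarith
    calc ENNReal.ofReal ‖Real.log t‖
        ≤ ENNReal.ofReal (max (Real.log t) 0 + max (-Real.log t) 0) :=
          ENNReal.ofReal_le_ofReal habs
      _ = ENNReal.ofReal (max (Real.log t) 0) + ENNReal.ofReal (max (-Real.log t) 0) :=
          ENNReal.ofReal_add (le_max_right _ _) (le_max_right _ _)
      _ ≤ _ := add_le_add_left h1 _
  calc ∫⁻ x, ENNReal.ofReal ‖Real.log ((Q.rnDeriv P x).toReal)‖ ∂Q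
      ≤ ∫⁻ x, ((Q.rnDeriv P x) ^ l * ENNReal.ofReal l⁻¹
          + ENNReal.ofReal (max (-Real.log ((Q.rnDeriv P x).toReal)) 0)) ∂Q :=
        lintegral_mono_ae hsplit
    _ = (∫⁻ x, (Q.rnDeriv P x) ^ l ∂Q) * ENNReal.ofReal l⁻¹
          + ∫⁻ x, ENNReal.ofReal (max (-Real.log ((Q.rnDeriv P x).toReal)) 0) ∂Q := by
        rw [lintegral_add_left ((q_rpow_meas Q P l).mul_const _)]
        rw [lintegral_mul_const _ (q_rpow_meas Q P l)]
    _ < ⊤ := by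
        apply ENNReal.add_lt_top.mpr
        constructor
        · exact ENNReal.mul_lt_top (lt_top_iff_ne_top.mpr hfin) ENNReal.ofReal_lt_top
        · exact lt_of_le_of_lt (q_neglog_le_one hQP) (by norm_num)

end Qside

section Qside2

variable {Q P : Measure Ω}

lemma q_boundD [IsProbabilityMeasure Q] [IsProbabilityMeasure P] (hQP : Q ≪ P)
    {e : ℝ} (he : 0 < e) (hfin2e : ∫⁻ x, (Q.rnDeriv P x) ^ (2 * e) ∂Q ≠ ⊤) :
    Integrable (fun x => if (Q.rnDeriv P x).toReal ≤ 1
      then -Real.log ((Q.rnDeriv P x).toReal)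
      else (Q.rnDeriv P x).toReal ^ (2 * e) * e⁻¹) Q := by
  have hm : Measurable fun x => (Q.rnDeriv P x).toReal :=
    (Measure.measurable_rnDeriv Q P).ennreal_toReal
  have hmeas : Measurable (fun x => if (Q.rnDeriv P x).toReal ≤ 1
      then -Real.log ((Q.rnDeriv P x).toReal)
      else (Q.rnDeriv P x).toReal ^ (2 * e) * e⁻¹) := by
    apply Measurable.ite (measurableSet_le hm measurable_const)
      (Real.measurable_log.comp hm).neg
    exact ((by fun_prop : Measurable fun y : ℝ => y ^ (2*e)).comp hm).mul_const _
  refine ⟨hmeas.aestronglyMeasurable, ?_⟩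
  rw [hasFiniteIntegral_iff_norm]
  have hsplit : ∀ᵐ x ∂Q, ENNReal.ofReal ‖if (Q.rnDeriv P x).toReal ≤ 1
      then -Real.log ((Q.rnDeriv P x).toReal)
      else (Q.rnDeriv P x).toReal ^ (2 * e) * e⁻¹‖
      ≤ ENNReal.ofReal (max (-Real.log ((Q.rnDeriv P x).toReal)) 0)
        + (Q.rnDeriv P x) ^ (2 * e) * ENNReal.ofReal e⁻¹ := by
    filter_upwards [q_ae_pos hQP, q_ae_lt_top hQP] with x hpos hlt
    set t := (Q.rnDeriv P x).toReal with ht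
    rcases le_or_gt t 1 with h1 | h1
    · rw [if_pos h1]
      have hlog : Real.log t ≤ 0 := Real.log_nonpos hpos.le h1
      rw [Real.norm_eq_abs, abs_of_nonneg (by linarith)]
      calc ENNReal.ofReal (-Real.log t) ≤ ENNReal.ofReal (max (-Real.log t) 0) :=
            ENNReal.ofReal_le_ofReal (le_max_left _ _)
        _ ≤ _ := le_self_add
    · rw [if_neg (not_le.mpr h1)]
      have hnn : 0 ≤ t ^ (2 * e) * e⁻¹ := by positivity
      rw [Real.norm_eq_abs, abs_of_nonneg hnn]
      have hrw : (Q.rnDeriv P x) ^ (2 * e) = ENNReal.ofReal (t ^ (2 * e)) := by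
        rw [ht, ENNReal.toReal_rpow, ENNReal.ofReal_toReal
          (ENNReal.rpow_lt_top_of_nonneg (by positivity) hlt.ne).ne]
      rw [hrw, ← ENNReal.ofReal_mul (Real.rpow_nonneg ENNReal.toReal_nonneg _)]
      exact le_add_self
  calc ∫⁻ x, ENNReal.ofReal ‖_‖ ∂Q
      ≤ ∫⁻ x, (ENNReal.ofReal (max (-Real.log ((Q.rnDeriv P x).toReal)) 0)
          + (Q.rnDeriv P x) ^ (2 * e) * ENNReal.ofReal e⁻¹) ∂Q := lintegral_mono_ae hsplit
    _ = (∫⁻ x, ENNReal.ofReal (max (-Real.log ((Q.rnDeriv P x).toReal)) 0) ∂Q)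
          + (∫⁻ x, (Q.rnDeriv P x) ^ (2 * e) ∂Q) * ENNReal.ofReal e⁻¹ := by
        rw [lintegral_add_left, lintegral_mul_const _ (q_rpow_meas Q P (2*e))]
        exact ENNReal.measurable_ofReal.comp
          (((Real.measurable_log.comp hm).neg).max measurable_const)
    _ < ⊤ := by
        apply ENNReal.add_lt_top.mpr
        exact ⟨lt_of_le_of_lt (q_neglog_le_one hQP) (by norm_num),
          ENNReal.mul_lt_top (lt_top_iff_ne_top.mpr hfin2e) ENNReal.ofReal_lt_top⟩

lemma q_tendsto_slope [IsProbabilityMeasure Q] [IsProbabilityMeasure P] (hQP : Q ≪ P)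
    {e : ℝ} (he : 0 < e) (hfin2e : ∫⁻ x, (Q.rnDeriv P x) ^ (2 * e) ∂Q ≠ ⊤) :
    Tendsto (fun l : ℝ => ∫ x, ((Q.rnDeriv P x).toReal ^ l - 1) / l ∂Q)
      (nhdsWithin 0 (Set.Ioi 0)) (nhds (∫ x, Real.log ((Q.rnDeriv P x).toReal) ∂Q)) := by
  have hm : Measurable fun x => (Q.rnDeriv P x).toReal :=
    (Measure.measurable_rnDeriv Q P).ennreal_toReal
  have hev : Set.Ioc 0 e ∈ nhdsWithin (0:ℝ) (Set.Ioi 0) :=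
    Ioc_mem_nhdsGT_of_mem ⟨le_rfl, he⟩
  apply tendsto_integral_filter_of_dominated_convergence
    (bound := fun x => if (Q.rnDeriv P x).toReal ≤ 1
      then -Real.log ((Q.rnDeriv P x).toReal)
      else (Q.rnDeriv P x).toReal ^ (2 * e) * e⁻¹)
  · filter_upwards with l
    exact ((((by fun_prop : Measurable fun y : ℝ => y ^ l).comp hm).sub
      measurable_const).div_const l).aestronglyMeasurable
  · filter_upwards [hev] with l hl
    filter_upwards [q_ae_pos hQP] with x hpos
    set t := (Q.rnDeriv P x).toReal with ht
    rcases le_or_gt t 1 with h1 | h1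
    · rw [if_pos h1, Real.norm_eq_abs]
      exact ineq_abs_le_one hpos h1 hl.1
    · rw [if_neg (not_le.mpr h1), Real.norm_eq_abs]
      have hnn : 0 ≤ (t ^ l - 1) / l :=
        div_nonneg (by linarith [ineq_one_le_rpow h1.le hl.1.le]) hl.1.le
      rw [abs_of_nonneg hnn]
      exact ineq_ge_one h1.le hl.1 hl.2
  · exact q_boundD hQP he hfin2e
  · filter_upwards [q_ae_pos hQP] with x hpos
    exact tendsto_rpow_slope hpos

end Qside2

section PartA

lemma qa_lintegral (μ : Measure ℝ) (hsupp : μ (Set.Iio 0) = 0)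
    {Q P : Measure Ω} [IsProbabilityMeasure Q] [IsProbabilityMeasure P] (hQP : Q ≪ P)
    (hmap : P.map (fun x => (Q.rnDeriv P x).toReal) = μ) {l : ℝ} (hl : 0 ≤ l) :
    ∫⁻ x, (Q.rnDeriv P x) ^ l ∂Q = Amu μ l := by
  have hm := Measure.measurable_rnDeriv Q P
  have hg : Measurable fun x => (Q.rnDeriv P x) ^ l :=
    (by fun_prop : Measurable fun y : ℝ≥0∞ => y ^ l).comp hm
  have step1 : ∫⁻ x, (Q.rnDeriv P x) ^ l ∂Q = ∫⁻ x, (Q.rnDeriv P x) ^ (l + 1) ∂P := by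
    have h0 := lintegral_withDensity_eq_lintegral_mul P hm hg
    rw [Measure.withDensity_rnDeriv_eq Q P hQP] at h0
    rw [h0]
    apply lintegral_congr
    intro x
    show Q.rnDeriv P x * Q.rnDeriv P x ^ l = Q.rnDeriv P x ^ (l + 1)
    rw [ENNReal.rpow_add_of_nonneg l 1 hl zero_le_one, ENNReal.rpow_one, mul_comm]
  have step2 : ∫⁻ x, (Q.rnDeriv P x) ^ (l + 1) ∂P
      = ∫⁻ x, ENNReal.ofReal ((Q.rnDeriv P x).toReal) ^ (l + 1) ∂P := by
    apply lintegral_congr_ae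
    filter_upwards [Measure.rnDeriv_lt_top Q P] with x hx
    rw [ENNReal.ofReal_toReal hx.ne]
  have step3 : ∫⁻ x, ENNReal.ofReal ((Q.rnDeriv P x).toReal) ^ (l + 1) ∂P
      = ∫⁻ t, ENNReal.ofReal t ^ (l + 1) ∂μ := by
    rw [← hmap]
    exact (lintegral_map ((by fun_prop : Measurable fun y : ℝ≥0∞ => y ^ (l+1)).comp
      ENNReal.measurable_ofReal) hm.ennreal_toReal).symm
  rw [step1, step2, step3, layercake_rpow μ hsupp hl]

end PartA

/-- **Membership and relative-entropy bound for `U^μ(P)` (Lemma 3.4).** Let `μ` be a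
probability measure on `[0,∞)` with mean `1` whose `Λ_μ` is finite on a neighborhood of `0`.
Then `U^μ(P)` contains every probability measure `Q ≪ P` such that `dQ/dP` is distributed
as `μ` under `P`; any such `Q` saturates the MGF bound, i.e.
`Λ_Q^{log dQ/dP}(λ) = Λ_μ(λ)` for all `λ ≥ 0`, and satisfies
`R(Q‖P) = 1 + ∫₀^∞ G_μ(z) log z dz`. More generally every `Q ∈ U^μ(P)` satisfies
`R(Q‖P) ≤ 1 + ∫₀^∞ G_μ(z) log z dz`. -/
theorem Umu_membership_and_relEnt (μ : Measure ℝ) [IsProbabilityMeasure μ]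
    (hsupp : μ (Set.Iio 0) = 0)
    (hmean : (∫⁻ t, ENNReal.ofReal t ∂μ) = 1)
    (hfin : ∃ ε > (0 : ℝ), ∀ l : ℝ, 0 ≤ l → l < ε → Lmu μ l ≠ ⊤ ∧ Lmu μ l ≠ ⊥)
    (P : Measure Ω) [IsProbabilityMeasure P] :
    (∀ Q : Measure Ω, IsProbabilityMeasure Q → Q ≪ P →
      P.map (fun x => (Q.rnDeriv P x).toReal) = μ →
      Q ∈ Umu μ P ∧
      (∀ l : ℝ, 0 ≤ l → cgfLLR Q P l = Lmu μ l) ∧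
      relEnt Q P =
        ((1 + ∫ z in Set.Ioi (0 : ℝ), (Gmu μ z).toReal * Real.log z : ℝ) : EReal)) ∧
    (∀ Q ∈ Umu μ P, relEnt Q P ≤
      ((1 + ∫ z in Set.Ioi (0 : ℝ), (Gmu μ z).toReal * Real.log z : ℝ) : EReal)) := by
  obtain ⟨ε, hε, hfin'⟩ := hfin
  have hAfin : ∀ l, 0 ≤ l → l < ε → Amu μ l ≠ ⊤ := by
    intro l h1 h2
    have := (hfin' l h1 h2).1
    rw [Lmu_eq_log_Amu] at this
    simpa using this
  set e := ε / 4 with he_def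
  have he : 0 < e := by positivity
  have h2e : 2 * e < ε := by rw [he_def]; linarith
  have htendC := tendsto_Amu_slope μ hsupp hmean hε hAfin
  set C := 1 + ∫ z in Set.Ioi (0:ℝ), (Gmu μ z).toReal * Real.log z with hC
  constructor
  · -- Part A
    intro Q hQprob hQP hmap
    haveI := hQprob
    have hQA : ∀ l : ℝ, 0 ≤ l → ∫⁻ x, (Q.rnDeriv P x) ^ l ∂Q = Amu μ l :=
      fun l hl => qa_lintegral μ hsupp hQP hmap hl
    have hcgf : ∀ l : ℝ, 0 ≤ l → cgfLLR Q P l = Lmu μ l := by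
      intro l hl
      rw [show cgfLLR Q P l = ENNReal.log (∫⁻ x, (Q.rnDeriv P x) ^ l ∂Q) from rfl,
        hQA l hl, Lmu_eq_log_Amu]
    refine ⟨⟨hQprob, hQP, fun l hl => le_of_eq (hcgf l hl.le)⟩, hcgf, ?_⟩
    -- relative entropy value
    have hfin2e : ∫⁻ x, (Q.rnDeriv P x) ^ (2 * e) ∂Q ≠ ⊤ := by
      rw [hQA (2 * e) (by linarith)]
      exact hAfin (2 * e) (by linarith) h2e
    have htendQ := q_tendsto_slope hQP he hfin2e
    have heq : (fun l : ℝ => ∫ x, ((Q.rnDeriv P x).toReal ^ l - 1) / l ∂Q)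
        =ᶠ[nhdsWithin (0:ℝ) (Set.Ioi 0)] fun l => ((Amu μ l).toReal - 1) / l := by
      filter_upwards [Ioo_mem_nhdsGT_of_mem (⟨le_rfl, hε⟩ : (0:ℝ) ∈ Set.Ico 0 ε)] with l hl
      have hne : ∫⁻ x, (Q.rnDeriv P x) ^ l ∂Q ≠ ⊤ := by
        rw [hQA l hl.1.le]; exact hAfin l hl.1.le hl.2
      rw [(q_slope_integral hQP hl.1 hne).2, hQA l hl.1.le]
    have h1 := htendQ.congr' heq
    have hval : ∫ x, Real.log ((Q.rnDeriv P x).toReal) ∂Q = C :=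
      tendsto_nhds_unique h1 htendC
    rw [show relEnt Q P = if Q ≪ P then
        ((∫ x, Real.log (Q.rnDeriv P x).toReal ∂Q : ℝ) : EReal) else ⊤ from rfl,
      if_pos hQP, hval]
  · -- Part B
    intro Q hQ
    obtain ⟨hQprob, hQP, hcgf⟩ := hQ
    haveI := hQprob
    have hfinl : ∀ l : ℝ, 0 < l → l < ε → ∫⁻ x, (Q.rnDeriv P x) ^ l ∂Q ≤ Amu μ l := by
      intro l h1 h2
      have h := hcgf l h1
      rw [show cgfLLR Q P l = ENNReal.log (∫⁻ x, (Q.rnDeriv P x) ^ l ∂Q) from rfl,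
        Lmu_eq_log_Amu] at h
      exact ENNReal.log_le_log_iff.mp h
    have hne : ∀ l : ℝ, 0 < l → l < ε → ∫⁻ x, (Q.rnDeriv P x) ^ l ∂Q ≠ ⊤ := by
      intro l h1 h2
      exact (lt_of_le_of_lt (hfinl l h1 h2)
        (lt_top_iff_ne_top.mpr (hAfin l h1.le h2))).ne
    have hlog_int : Integrable (fun x => Real.log ((Q.rnDeriv P x).toReal)) Q :=
      q_log_integrable hQP he (hne e he (by rw [he_def]; linarith))
    have hle : ∀ᶠ l in nhdsWithin (0:ℝ) (Set.Ioi 0),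
        ∫ x, Real.log ((Q.rnDeriv P x).toReal) ∂Q ≤ ((Amu μ l).toReal - 1) / l := by
      filter_upwards [Ioo_mem_nhdsGT_of_mem (⟨le_rfl, hε⟩ : (0:ℝ) ∈ Set.Ico 0 ε)] with l hl
      obtain ⟨hsint, hsval⟩ := q_slope_integral hQP hl.1 (hne l hl.1 hl.2)
      have hmono : ∫ x, Real.log ((Q.rnDeriv P x).toReal) ∂Q
          ≤ ∫ x, ((Q.rnDeriv P x).toReal ^ l - 1) / l ∂Q := by
        apply integral_mono_ae hlog_int hsint
        filter_upwards [q_ae_pos hQP] with x hpos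
        exact ineq_log_le hpos hl.1
      rw [hsval] at hmono
      refine le_trans hmono ?_
      have hto : (∫⁻ x, (Q.rnDeriv P x) ^ l ∂Q).toReal ≤ (Amu μ l).toReal :=
        ENNReal.toReal_mono (hAfin l hl.1.le hl.2) (hfinl l hl.1 hl.2)
      have hl0 : (0:ℝ) ≤ l := hl.1.le
      gcongr <;> assumption
    have := ge_of_tendsto htendC hle
    rw [show relEnt Q P = if Q ≪ P then
        ((∫ x, Real.log (Q.rnDeriv P x).toReal ∂Q : ℝ) : EReal) else ⊤ from rfl,
      if_pos hQP]
    exact_mod_cast this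
end
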